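/- arXiv:1812.10696 — 8 statements merged into one kernel-verified Lean document; each statement's English description precedes it below -/
import Mathlib

section
/- Let A_1, ..., A_n be subsets of the reals, each of size q ≥ 2, and let B = A_1 × ... × A_n ⊆ ℝ^n. If F ⊆ B is a finite set such that the set of nonzero Euclidean distances between distinct points of F has at most s elements, then |F| ≤ 2 · |{(α_1,...,α_n) : 0 ≤ α_i ≤ q−1 for each i, and α_1 + ... + α_n ≤ s}|. -/
/-!
For `p ∈ F` the polynomial `f_p(x) = ∏_{d ∈ d(F)} (d² - |p - x|²)` vanishes on `F \ {p}` but not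
at `p`, so the matrix `(f_p(x))_{p,x ∈ F}` is diagonal with nonzero diagonal and has rank `|F|`.
On the other hand `f_p(x)` has total degree at most `2s` in `(p, x)`, so every monomial has degree
at most `s` in `p` or in `x`. On the grid `A_1 × ⋯ × A_n` each `t^k` with `t ∈ A_i` agrees with a
polynomial of degree at most `min(k, q - 1)` (reduce modulo `∏_{a ∈ A_i} (X - a)`), so the matrix
is a sum of a matrix whose rows and a matrix whose columns lie in the span of the reduced
monomials of degree at most `s`. Each has rank at most the number of such monomials.
-/

open Finset Matrix

namespace Matrix

variable {m n K : Type*} [Fintype n] [Field K]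

theorem rank_add_le (A B : Matrix m n K) : (A + B).rank ≤ A.rank + B.rank := by
  rw [rank, rank, rank, mulVecLin_add]
  exact (Submodule.finrank_mono (LinearMap.range_add_le _ _)).trans
    (Submodule.finrank_add_le_finrank_add_finrank _ _)

theorem rank_le_finrank_of_row_mem [Finite m] {A : Matrix m n K} {U : Submodule K (n → K)}
    (hA : ∀ i, A i ∈ U) : A.rank ≤ Module.finrank K U := by
  rw [rank_eq_finrank_span_row]
  exact Submodule.finrank_mono (Submodule.span_le.2 (Set.range_subset_iff.2 hA))

variable {τ : Type*}

theorem rank_sum_mul_le_of_right_mem [Finite m] (T : Finset τ) (a : τ → m → K) (b : τ → n → K)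
    {U : Submodule K (n → K)} (hb : ∀ k ∈ T, b k ∈ U) :
    (of fun i j => ∑ k ∈ T, a k i * b k j).rank ≤ Module.finrank K U := by
  refine rank_le_finrank_of_row_mem fun i => ?_
  have hrow : (of fun i j => ∑ k ∈ T, a k i * b k j) i = ∑ k ∈ T, a k i • b k := by
    ext j; simp [Finset.sum_apply]
  rw [hrow]
  exact Submodule.sum_mem _ fun k hk => Submodule.smul_mem _ _ (hb k hk)

theorem rank_sum_mul_le_of_left_mem [Fintype m] (T : Finset τ) (a : τ → m → K) (b : τ → n → K)
    {U : Submodule K (m → K)} (ha : ∀ k ∈ T, a k ∈ U) :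
    (of fun i j => ∑ k ∈ T, a k i * b k j).rank ≤ Module.finrank K U := by
  rw [← rank_transpose]
  convert rank_sum_mul_le_of_right_mem T b a ha using 2
  ext j i
  simp [mul_comm]

end Matrix

namespace Polynomial

open scoped Polynomial

variable {K : Type*} [Field K]

theorem exists_natDegree_le_eval_eq_pow (A : Finset K) (hA : A.Nonempty) (k : ℕ) :
    ∃ r : K[X], r.natDegree ≤ k ∧ r.natDegree < #A ∧ ∀ a ∈ A, r.eval a = a ^ k := by
  set P := Lagrange.nodal A id
  have hP : P.Monic := Lagrange.nodal_monic
  have hPdeg : P.natDegree = #A := Lagrange.natDegree_nodal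
  refine ⟨X ^ k %ₘ P, ?_, ?_, fun a ha => ?_⟩
  · exact natDegree_modByMonic_le_left.trans (natDegree_X_pow k).le
  · refine hPdeg ▸ natDegree_modByMonic_lt _ hP fun h => ?_
    have := hPdeg ▸ congrArg natDegree h
    simp [hA.card_pos.ne'] at this
  · rw [← eval_X_pow (x := a)]
    exact eval₂_modByMonic_eq_self_of_root (Lagrange.eval_nodal_at_node (v := id) ha)

end Polynomial

section Grid

open Polynomial

variable {K ι : Type*} [Field K] {n : ℕ}

def monomialVec (x : ι → Fin n → K) (γ : Fin n → ℕ) : ι → K := fun t => ∏ i, x t i ^ γ i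

def reducedMonomialSpan (x : ι → Fin n → K) (q s : ℕ) : Submodule K (ι → K) :=
  Submodule.span K (Set.range fun α : {α : Fin n → Fin q // ∑ i, (α i : ℕ) ≤ s} =>
    monomialVec x fun i => α.1 i)

theorem finrank_reducedMonomialSpan_le (x : ι → Fin n → K) (q s : ℕ) :
    Module.finrank K (reducedMonomialSpan x q s) ≤
      Fintype.card {α : Fin n → Fin q // ∑ i, (α i : ℕ) ≤ s} :=
  finrank_range_le_card _

theorem monomialVec_mem_reducedMonomialSpan {x : ι → Fin n → K} {q s : ℕ} (hq : q ≠ 0)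
    {A : Fin n → Set K} (hA : ∀ i, (A i).ncard = q) (hx : ∀ t i, x t i ∈ A i)
    {γ : Fin n → ℕ} (hγ : ∑ i, γ i ≤ s) : monomialVec x γ ∈ reducedMonomialSpan x q s := by
  have hfin : ∀ i, (A i).Finite := fun i => Set.finite_of_ncard_ne_zero ((hA i).trans_ne hq)
  have hcard : ∀ i, #(hfin i).toFinset = q := fun i => by
    rw [← Set.ncard_eq_toFinset_card _ (hfin i), hA i]
  choose r hr_le hr_lt hr_eval using fun i =>
    Polynomial.exists_natDegree_le_eval_eq_pow (hfin i).toFinset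
      (Finset.card_pos.1 ((hcard i).symm ▸ Nat.pos_of_ne_zero hq)) (γ i)
  have hpow : ∀ t i, x t i ^ γ i = ∑ j : Fin q, (r i).coeff j * x t i ^ (j : ℕ) := fun t i => by
    rw [← hr_eval i _ ((hfin i).mem_toFinset.2 (hx t i)),
      eval_eq_sum_range' ((hr_lt i).trans_eq (hcard i)), Fin.sum_univ_eq_sum_range
        (fun j => (r i).coeff j * x t i ^ j)]
  have hexpand : monomialVec x γ =
      ∑ α : Fin n → Fin q, (∏ i, (r i).coeff (α i)) • monomialVec x fun i => α i := by
    ext t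
    simp only [monomialVec, hpow, Fintype.prod_sum, Finset.sum_apply, Pi.smul_apply, smul_eq_mul,
      Finset.prod_mul_distrib]
  rw [hexpand]
  refine Submodule.sum_mem _ fun α _ => ?_
  by_cases hc : ∏ i, (r i).coeff (α i) = 0
  · simp [hc]
  have hαγ : ∀ i, (α i : ℕ) ≤ γ i := fun i =>
    (le_natDegree_of_ne_zero (Finset.prod_ne_zero_iff.1 hc i (mem_univ i))).trans (hr_le i)
  exact Submodule.smul_mem _ _ (Submodule.subset_span
    ⟨⟨α, (Finset.sum_le_sum fun i _ => hαγ i).trans hγ⟩, rfl⟩)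

end Grid

open MvPolynomial

namespace MvPolynomial

variable {R σ τ : Type*} [CommSemiring R] [Fintype σ] [Fintype τ]

theorem eval_sumElim (P : MvPolynomial (σ ⊕ τ) R) (y : σ → R) (z : τ → R) :
    eval (Sum.elim y z) P =
      ∑ m ∈ P.support, coeff m P * ((∏ i, y i ^ m (.inl i)) * ∏ j, z j ^ m (.inr j)) := by
  simp only [eval_eq', Fintype.prod_sum_type, Sum.elim_inl, Sum.elim_inr]

theorem sum_inl_add_sum_inr_le_totalDegree {P : MvPolynomial (σ ⊕ τ) R} {m : σ ⊕ τ →₀ ℕ}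
    (hm : m ∈ P.support) : ∑ i, m (.inl i) + ∑ j, m (.inr j) ≤ P.totalDegree := by
  have := le_totalDegree hm
  rwa [Finsupp.sum_fintype _ _ (fun _ => rfl), Fintype.sum_sum_type] at this

end MvPolynomial

noncomputable def distanceAnnihilator (n : ℕ) (D : Finset ℝ) : MvPolynomial (Fin n ⊕ Fin n) ℝ :=
  ∏ d ∈ D, (C (d ^ 2) - ∑ i, (X (.inl i) - X (.inr i)) ^ 2)

theorem totalDegree_distanceAnnihilator_le (n : ℕ) (D : Finset ℝ) :
    (distanceAnnihilator n D).totalDegree ≤ 2 * #D := by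
  have hsq : (∑ i : Fin n,
      (X (.inl i) - X (.inr i) : MvPolynomial (Fin n ⊕ Fin n) ℝ) ^ 2).totalDegree ≤ 2 := by
    refine (totalDegree_finsetSum _ _).trans (Finset.sup_le fun i _ => ?_)
    refine (totalDegree_pow _ _).trans ?_
    have := (totalDegree_sub (X (.inl i) : MvPolynomial (Fin n ⊕ Fin n) ℝ) (X (.inr i))).trans_eq
      (by rw [totalDegree_X, totalDegree_X, max_self])
    omega
  refine (totalDegree_finsetProd _ _).trans ?_
  rw [mul_comm, ← smul_eq_mul, ← Finset.sum_const]
  exact Finset.sum_le_sum fun d _ =>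
    (totalDegree_sub _ _).trans (max_le (by rw [totalDegree_C]; omega) hsq)

theorem eval_distanceAnnihilator {n : ℕ} (D : Finset ℝ) (p x : EuclideanSpace ℝ (Fin n)) :
    eval (Sum.elim p.ofLp x.ofLp) (distanceAnnihilator n D) = ∏ d ∈ D, (d ^ 2 - dist p x ^ 2) := by
  rw [EuclideanSpace.dist_eq, Real.sq_sqrt (by positivity)]
  simp [distanceAnnihilator, Real.dist_eq, sq_abs]

theorem rank_evalMatrix_le {K ι : Type*} [Field K] [Fintype ι] {n q s : ℕ} (hq : q ≠ 0)
    {A : Fin n → Set K} (hA : ∀ i, (A i).ncard = q) {x : ι → Fin n → K} (hx : ∀ t i, x t i ∈ A i)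
    {P : MvPolynomial (Fin n ⊕ Fin n) K} (hP : P.totalDegree ≤ 2 * s) :
    (of fun t u => eval (Sum.elim (x t) (x u)) P).rank ≤
      2 * Fintype.card {α : Fin n → Fin q // ∑ i, (α i : ℕ) ≤ s} := by
  classical
  set U := reducedMonomialSpan x q s
  set left := fun m : Fin n ⊕ Fin n →₀ ℕ => coeff m P • monomialVec x fun i => m (.inl i)
  set right := fun m : Fin n ⊕ Fin n →₀ ℕ => monomialVec x fun j => m (.inr j)
  set low := P.support.filter fun m => ∑ j, m (.inr j) ≤ s
  set high := P.support.filter fun m => ¬∑ j, m (.inr j) ≤ s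
  have hsplit : (of fun t u => eval (Sum.elim (x t) (x u)) P) =
      of (fun t u => ∑ m ∈ low, left m t * right m u) +
      of (fun t u => ∑ m ∈ high, left m t * right m u) := by
    ext t u
    simp only [Matrix.add_apply, of_apply, low, high, sum_filter_add_sum_filter_not, eval_sumElim,
      left, right, monomialVec, Pi.smul_apply, smul_eq_mul, mul_assoc]
  -- each monomial of total degree ≤ 2s has degree ≤ s in the first or in the second point
  have hright : ∀ m ∈ low, right m ∈ U := fun m hm =>
    monomialVec_mem_reducedMonomialSpan hq hA hx (mem_filter.1 hm).2
  have hleft : ∀ m ∈ high, left m ∈ U := fun m hm => by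
    obtain ⟨hm, hlarge⟩ := mem_filter.1 hm
    have := sum_inl_add_sum_inr_le_totalDegree hm
    exact Submodule.smul_mem _ _ (monomialVec_mem_reducedMonomialSpan hq hA hx (by omega))
  calc _ ≤ Module.finrank K U + Module.finrank K U :=
        hsplit ▸ (rank_add_le _ _).trans (add_le_add
          (rank_sum_mul_le_of_right_mem _ _ _ hright) (rank_sum_mul_le_of_left_mem _ _ _ hleft))
    _ ≤ _ := by linarith [finrank_reducedMonomialSpan_le x q s]

theorem rank_evalMatrix_distanceAnnihilator {n : ℕ} {F : Set (EuclideanSpace ℝ (Fin n))}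
    [Fintype F] {D : Finset ℝ} (hD : ∀ p ∈ F, ∀ x ∈ F, p ≠ x → dist p x ∈ D) (hD0 : 0 ∉ D) :
    (of fun t u : F => eval (Sum.elim (t : EuclideanSpace ℝ (Fin n)).ofLp
      (u : EuclideanSpace ℝ (Fin n)).ofLp) (distanceAnnihilator n D)).rank = Fintype.card F := by
  classical
  have hdiag : (of fun t u : F => eval (Sum.elim (t : EuclideanSpace ℝ (Fin n)).ofLp
      (u : EuclideanSpace ℝ (Fin n)).ofLp) (distanceAnnihilator n D)) =
      diagonal fun _ => ∏ d ∈ D, d ^ 2 := by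
    ext t u
    rw [of_apply, eval_distanceAnnihilator]
    rcases eq_or_ne t u with rfl | htu
    · simp
    · rw [diagonal_apply_ne _ htu]
      exact prod_eq_zero (hD t t.2 u u.2 (Subtype.coe_ne_coe.2 htu)) (sub_self _)
  have hdiag_ne : ∏ d ∈ D, d ^ 2 ≠ 0 :=
    prod_ne_zero_iff.2 fun d hd => pow_ne_zero _ (ne_of_mem_of_not_mem hd hD0)
  simp [hdiag, rank_diagonal, hdiag_ne]

theorem stmt_0_general (n s q : ℕ) (hq : 2 ≤ q) (A : Fin n → Set ℝ)
    (hA : ∀ i, (A i).ncard = q)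
    (F : Set (EuclideanSpace ℝ (Fin n)))
    (hFB : ∀ p ∈ F, ∀ i, p i ∈ A i)
    (hdist : {d : ℝ | ∃ p₁ ∈ F, ∃ p₂ ∈ F, p₁ ≠ p₂ ∧ d = dist p₁ p₂}.ncard ≤ s) :
    F.ncard ≤ 2 * (Finset.univ.filter
      (fun α : Fin n → Fin q => ∑ i, (α i : ℕ) ≤ s)).card := by
  obtain hF | hF := F.finite_or_infinite
  swap
  · simp [hF.ncard]
  have := hF.fintype
  set distances := {d : ℝ | ∃ p₁ ∈ F, ∃ p₂ ∈ F, p₁ ≠ p₂ ∧ d = dist p₁ p₂}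
  have hfin : distances.Finite := ((hF.prod hF).image fun pq => dist pq.1 pq.2).subset
    fun _ ⟨p₁, hp₁, p₂, hp₂, _, hd⟩ => ⟨(p₁, p₂), ⟨hp₁, hp₂⟩, hd.symm⟩
  have hrank := rank_evalMatrix_le (s := s) (by omega) hA
    (x := fun t : F => (t : EuclideanSpace ℝ (Fin n)).ofLp) (fun t => hFB t t.2)
    ((totalDegree_distanceAnnihilator_le n hfin.toFinset).trans
      (by rw [← Set.ncard_eq_toFinset_card _ hfin]; omega))
  rw [rank_evalMatrix_distanceAnnihilator
    (fun p hp x hx hpx => hfin.mem_toFinset.2 ⟨p, hp, x, hx, hpx, rfl⟩)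
    (fun h0 => by
      obtain ⟨p, -, x, -, hpx, h⟩ := hfin.mem_toFinset.1 h0
      exact hpx (dist_eq_zero.1 h.symm))] at hrank
  simpa [Fintype.card_subtype] using hrank

theorem stmt_0 (n s q : ℕ) (hq : 2 ≤ q) (A : Fin n → Set ℝ)
    (hA : ∀ i, (A i).ncard = q)
    (F : Set (EuclideanSpace ℝ (Fin n))) (hF : F.Finite)
    (hFB : ∀ p ∈ F, ∀ i, p i ∈ A i)
    (hdist : {d : ℝ | ∃ p₁ ∈ F, ∃ p₂ ∈ F, p₁ ≠ p₂ ∧ d = dist p₁ p₂}.ncard ≤ s) :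
    F.ncard ≤ 2 * (Finset.univ.filter
      (fun α : Fin n → Fin q => ∑ i, (α i : ℕ) ≤ s)).card :=
  stmt_0_general n s q hq A hA F hFB hdist
end

section
/- Let A_1, ..., A_n be subsets of the reals, each of size q ≥ 2, and let B = A_1 × ... × A_n ⊆ ℝ^n. Suppose F ⊆ B is a finite set such that (i) for every f ∈ F, the scalar product (f, f) is not equal to (p_1, p_2) for any distinct p_1, p_2 ∈ F, and (ii) the set of scalar products {(p_1, p_2) : p_1, p_2 ∈ F, p_1 ≠ p_2} has at most s elements. Then |F| ≤ |{(α_1,...,α_n) : 0 ≤ α_i ≤ q−1 for each i, and α_1 + ... + α_n ≤ s}|. -/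
/-!
For `f ∈ F` let `P_f = ∏_{μ ∈ T} (⟨f, X⟩ - μ)`, where `T` is the set of inner products of distinct
points of `F`. Then `P_f` vanishes at every point of `F` other than `f` and, by (i), not at `f`,
so the functions `P_f|_F` are linearly independent. Dividing `P_f` (in degree-lexicographic order)
by the monic polynomials `∏_{a ∈ A_i} (X_i - a)`, which vanish on `B`, gives a polynomial with the
same values on `F`, of total degree at most `|T| ≤ s` and of degree `< q` in each variable. The
space of such polynomials has a basis of monomials indexed by the exponent vectors being counted.
-/

open MvPolynomial MonomialOrder Finset

theorem linearIndependent_of_dual_diagonal {K M ι : Type*} [CommRing K] [NoZeroDivisors K]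
    [AddCommGroup M] [Module K M] {v : ι → M} (φ : ι → M →ₗ[K] K)
    (hdiag : ∀ i, φ i (v i) ≠ 0) (hoff : ∀ i j, i ≠ j → φ j (v i) = 0) :
    LinearIndependent K v := by
  classical
  rw [linearIndependent_iff']
  intro s c hc j hj
  have := congrArg (φ j) hc
  rw [map_sum, sum_eq_single j (fun i _ hij => by simp [hoff i j hij]) (absurd hj)] at this
  simpa [hdiag j] using this

namespace MvPolynomial

variable {R σ : Type*} [CommRing R]

theorem exists_reduced_eval_eq_on_grid [Finite σ] (S : σ → Finset R) (p : MvPolynomial σ R) :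
    ∃ r : MvPolynomial σ R, r.totalDegree ≤ p.totalDegree ∧
      (∀ c ∈ r.support, ∀ i, c i < #(S i)) ∧
      ∀ x : σ → R, (∀ i, x i ∈ S i) → eval x r = eval x p := by
  classical
  cases subsingleton_or_nontrivial R
  · exact ⟨0, by simp, by simp, fun _ _ => Subsingleton.elim _ _⟩
  let : LinearOrder σ := WellOrderingRel.isWellOrder.linearOrder
  let b : σ → MvPolynomial σ R := fun i => ∏ a ∈ S i, (X i - C a)
  have hb_monic (i : σ) : degLex.Monic (b i) := Monic.prod fun a _ => degLex.monic_X_sub_C i a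
  have hb_degree (i : σ) : degLex.degree (b i) = Finsupp.single i #(S i) := by
    rw [degree_prod_of_regular fun a _ => by
      rw [(degLex.monic_X_sub_C i a).leadingCoeff_eq_one]; exact isRegular_one]
    simp [degree_X_sub_C]
  obtain ⟨g, r, hp, hg, hr⟩ :=
    degLex.div (b := b) (fun i => by rw [(hb_monic i).leadingCoeff_eq_one]; exact isUnit_one) p
  have hlc : Finsupp.linearCombination _ b g = ∑ i ∈ g.support, b i * g i := by
    simp [Finsupp.linearCombination_apply, Finsupp.sum, mul_comm]
  refine ⟨r, ?_, ?_, ?_⟩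
  · rw [eq_sub_of_add_eq' hp.symm, hlc]
    refine (totalDegree_sub _ _).trans (max_le le_rfl (totalDegree_finsetSum_le fun i _ => ?_))
    exact degLex_totalDegree_monotone (hg i)
  · intro c hc i
    simpa [hb_degree, Finsupp.single_le_iff] using hr c hc i
  · intro x hx
    have hb_eval (i : σ) : eval x (b i) = 0 := by
      simp only [b, map_prod]
      exact prod_eq_zero (hx i) (by simp)
    rw [eq_sub_of_add_eq' hp.symm, hlc, map_sub, map_sum]
    simp [hb_eval]

theorem card_le_of_linearIndependent_of_mem_restrictSupport [Nontrivial R] {ι : Type*}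
    [Finite ι] {v : ι → MvPolynomial σ R} (hv : LinearIndependent R v)
    {M : Finset (σ →₀ ℕ)} (hM : ∀ i, v i ∈ restrictSupport R (M : Set (σ →₀ ℕ))) :
    Nat.card ι ≤ #M := by
  have := Fintype.ofFinite ι
  let basis := basisRestrictSupport R (M : Set (σ →₀ ℕ))
  have := Module.Finite.of_basis basis
  have hw : LinearIndependent R (fun i => (⟨v i, hM i⟩ : restrictSupport R (M : Set (σ →₀ ℕ)))) :=
    LinearIndependent.of_comp (Submodule.subtype _) hv
  calc Nat.card ι = Fintype.card ι := Nat.card_eq_fintype_card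
    _ ≤ Module.finrank R (restrictSupport R (M : Set (σ →₀ ℕ))) := hw.fintype_card_le_finrank
    _ = #M := by
      rw [Module.finrank_eq_card_basis basis]
      simp only [Finset.coe_sort_coe, Fintype.card_coe]

variable [Fintype σ]

noncomputable def linearForm (a : σ → R) : MvPolynomial σ R := ∑ i, C (a i) * X i

@[simp]
theorem eval_linearForm (a x : σ → R) : eval x (linearForm a) = ∑ i, a i * x i := by
  simp [linearForm]

theorem totalDegree_linearForm_le (a : σ → R) : (linearForm a).totalDegree ≤ 1 :=
  totalDegree_finsetSum_le fun i _ => by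
    rw [C_mul_X_eq_monomial]
    exact (totalDegree_monomial_le _ _).trans (by simp)

theorem totalDegree_prod_linearForm_sub_C_le (a : σ → R) (T : Finset R) :
    (∏ μ ∈ T, (linearForm a - C μ)).totalDegree ≤ #T := by
  calc (∏ μ ∈ T, (linearForm a - C μ)).totalDegree
        ≤ ∑ μ ∈ T, (linearForm a - C μ).totalDegree := totalDegree_finsetProd _ _
    _ ≤ ∑ _μ ∈ T, 1 := by
      gcongr with μ
      exact (totalDegree_sub_C_le _ μ).trans (totalDegree_linearForm_le a)
    _ = #T := by simp

theorem linearIndependent_of_eval_eq_prod_linearForm_sub_C [IsDomain R] {F : Set (σ → R)}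
    {T : Finset R} (hT : ∀ f ∈ F, ∀ g ∈ F, f ≠ g → ∑ i, f i * g i ∈ T)
    (hT_diag : ∀ f ∈ F, ∑ i, f i * f i ∉ T) {r : F → MvPolynomial σ R}
    (hr : ∀ f g : F, eval g.1 (r f) = eval g.1 (∏ μ ∈ T, (linearForm f.1 - C μ))) :
    LinearIndependent R r := by
  have hr_eval (f g : F) : aeval g.1 (r f) = ∏ μ ∈ T, (∑ i, f.1 i * g.1 i - μ) := by
    simp [hr, map_prod]
  refine linearIndependent_of_dual_diagonal (fun g : F => (aeval g.1).toLinearMap)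
    (fun f => ?_) (fun f g hfg => ?_)
  · rw [AlgHom.toLinearMap_apply, hr_eval]
    exact prod_ne_zero_iff.2 fun μ hμ => sub_ne_zero.2 fun h => hT_diag f f.2 (h ▸ hμ)
  · rw [AlgHom.toLinearMap_apply, hr_eval]
    exact prod_eq_zero (hT f f.2 g g.2 (Subtype.coe_ne_coe.2 hfg)) (sub_self _)

theorem mem_restrictSupport_of_lt_of_totalDegree_le [DecidableEq σ] {q s : ℕ}
    {r : MvPolynomial σ R} (hr : ∀ c ∈ r.support, ∀ i, c i < q) (hs : r.totalDegree ≤ s) :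
    r ∈ restrictSupport R ↑((univ.filter fun α : σ → Fin q => ∑ i, (α i : ℕ) ≤ s).image
      fun α => Finsupp.equivFunOnFinite.symm fun i => (α i : ℕ)) := by
  intro c hc
  refine mem_image.2 ⟨fun i => ⟨c i, hr c hc i⟩, mem_filter.2 ⟨mem_univ _, ?_⟩, by ext; simp⟩
  calc ∑ i, c i = c.sum fun _ e => e := (Finsupp.sum_fintype c (fun _ e => e) fun _ => rfl).symm
    _ ≤ r.totalDegree := le_totalDegree hc
    _ ≤ s := hs

end MvPolynomial

theorem stmt_3_general (n s q : ℕ) (hq : 2 ≤ q) (A : Fin n → Set ℝ)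
    (hA : ∀ i, (A i).ncard = q)
    (F : Set (Fin n → ℝ))
    (hFB : ∀ p ∈ F, ∀ i, p i ∈ A i)
    (hself : ∀ f ∈ F, ∀ p₁ ∈ F, ∀ p₂ ∈ F, p₁ ≠ p₂ →
      (∑ i, f i * f i) ≠ ∑ i, p₁ i * p₂ i)
    (hsp : {x : ℝ | ∃ p₁ ∈ F, ∃ p₂ ∈ F, p₁ ≠ p₂ ∧ x = ∑ i, p₁ i * p₂ i}.ncard ≤ s) :
    F.ncard ≤ (Finset.univ.filter
      (fun α : Fin n → Fin q => ∑ i, (α i : ℕ) ≤ s)).card := by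
  classical
  have hA_fin (i : Fin n) : (A i).Finite := Set.finite_of_ncard_pos (by rw [hA i]; omega)
  have hF_fin : F.Finite :=
    (Set.Finite.pi hA_fin).subset fun p hp => Set.mem_univ_pi.2 (hFB p hp)
  have : Finite F := hF_fin.to_subtype
  set X := {x : ℝ | ∃ p₁ ∈ F, ∃ p₂ ∈ F, p₁ ≠ p₂ ∧ x = ∑ i, p₁ i * p₂ i}
  have hX_fin : X.Finite :=
    (hF_fin.image2 (fun p₁ p₂ : Fin n → ℝ => ∑ i, p₁ i * p₂ i) hF_fin).subset
      fun _ ⟨p₁, h₁, p₂, h₂, _, hx⟩ => ⟨p₁, h₁, p₂, h₂, hx.symm⟩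
  set T := hX_fin.toFinset
  have hT : #T ≤ s := by rwa [← Set.ncard_eq_toFinset_card X hX_fin]
  choose r hr_deg hr_lt hr_eval using fun f : F =>
    exists_reduced_eval_eq_on_grid (fun i => (hA_fin i).toFinset) (∏ μ ∈ T, (linearForm f - C μ))
  have hr_indep : LinearIndependent ℝ r := by
    refine linearIndependent_of_eval_eq_prod_linearForm_sub_C
      (fun f hf g hg hfg => hX_fin.mem_toFinset.2 ⟨f, hf, g, hg, hfg, rfl⟩) (fun f hf hf_mem => ?_)
      fun f g => hr_eval f g fun i => (hA_fin i).mem_toFinset.2 (hFB g g.2 i)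
    obtain ⟨p₁, h₁, p₂, h₂, hne, hf_eq⟩ := hX_fin.mem_toFinset.1 hf_mem
    exact hself f hf p₁ h₁ p₂ h₂ hne hf_eq
  have hS_card (i : Fin n) : #(hA_fin i).toFinset = q := by
    rw [← Set.ncard_eq_toFinset_card _ (hA_fin i), hA i]
  have hr_mem (f : F) := mem_restrictSupport_of_lt_of_totalDegree_le
    (fun c hc i => (hr_lt f c hc i).trans_eq (hS_card i))
    ((hr_deg f).trans ((totalDegree_prod_linearForm_sub_C_le _ T).trans hT))
  rw [← Nat.card_coe_set_eq]
  exact (card_le_of_linearIndependent_of_mem_restrictSupport hr_indep hr_mem).trans card_image_le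

theorem stmt_3 (n s q : ℕ) (hq : 2 ≤ q) (A : Fin n → Set ℝ)
    (hA : ∀ i, (A i).ncard = q)
    (F : Set (Fin n → ℝ)) (hF : F.Finite)
    (hFB : ∀ p ∈ F, ∀ i, p i ∈ A i)
    (hself : ∀ f ∈ F, ∀ p₁ ∈ F, ∀ p₂ ∈ F, p₁ ≠ p₂ →
      (∑ i, f i * f i) ≠ ∑ i, p₁ i * p₂ i)
    (hsp : {x : ℝ | ∃ p₁ ∈ F, ∃ p₂ ∈ F, p₁ ≠ p₂ ∧ x = ∑ i, p₁ i * p₂ i}.ncard ≤ s) :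
    F.ncard ≤ (Finset.univ.filter
      (fun α : Fin n → Fin q => ∑ i, (α i : ℕ) ≤ s)).card :=
  stmt_3_general n s q hq A hA F hFB hself hsp
end

section
/- Let n and s be positive integers with s ≤ n, and let F ⊆ {0,1}^n ⊆ ℝ^n be the set of characteristic vectors of all s-element subsets of {1,...,n}. Then |F| = C(n, s) and the set of distances between distinct points of F has at most s elements. -/
/-!
The characteristic vectors of `A` and `B` differ exactly on `A ∆ B`, so their distance is
`√#(A ∆ B)`. When `#A = #B = s` we have `#(A \ B) = #(B \ A) = k` with `1 ≤ k ≤ s` for `A ≠ B`,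
hence every distance is one of the `s` numbers `√(2k)`, `k = 1, …, s`.
-/

open Finset
open scoped symmDiff

namespace Finset

variable {α : Type*}

theorem ncard_setOf_card_eq [Fintype α] (s : ℕ) :
    {A : Finset α | #A = s}.ncard = (Fintype.card α).choose s := by
  rw [← Nat.card_coe_set_eq, Nat.card_eq_fintype_card]
  simp

variable [DecidableEq α] {A B : Finset α}

theorem card_symmDiff_of_card_eq (h : #A = #B) : #(A ∆ B) = 2 * #(A \ B) := by
  rw [Finset.symmDiff_def, card_union_of_disjoint disjoint_sdiff_sdiff, ← card_sdiff_comm h]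
  ring

theorem card_sdiff_pos_of_card_eq_of_ne (h : #A = #B) (hne : A ≠ B) : 0 < #(A \ B) := by
  refine card_pos.mpr (sdiff_nonempty.mpr fun hAB => hne ?_)
  exact eq_of_subset_of_card_le hAB h.ge

end Finset

section CharVec

variable {ι : Type*} [DecidableEq ι]

noncomputable def charVec (A : Finset ι) : EuclideanSpace ℝ ι :=
  WithLp.toLp 2 fun i => if i ∈ A then 1 else 0

theorem charVec_injective : Function.Injective (charVec : Finset ι → EuclideanSpace ℝ ι) := by
  intro A B h
  ext i
  have hi : charVec A i = charVec B i := by rw [h]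
  by_cases hA : i ∈ A <;> by_cases hB : i ∈ B <;> simp [charVec, hA, hB] at hi ⊢

theorem dist_charVec [Fintype ι] (A B : Finset ι) :
    dist (charVec A) (charVec B) = √(#(A ∆ B) : ℝ) := by
  have hcoord : ∀ i, dist (charVec A i) (charVec B i) ^ 2 = if i ∈ A ∆ B then 1 else 0 := by
    intro i
    by_cases hA : i ∈ A <;> by_cases hB : i ∈ B <;> simp [charVec, Finset.mem_symmDiff, hA, hB]
  rw [EuclideanSpace.dist_eq, Finset.sum_congr rfl fun i _ => hcoord i]
  simp

theorem dist_charVec_of_card_eq [Fintype ι] {s : ℕ} {A B : Finset ι} (hA : #A = s) (hB : #B = s)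
    (hne : A ≠ B) : ∃ k ∈ Icc 1 s, dist (charVec A) (charVec B) = √(2 * k) := by
  refine ⟨#(A \ B), mem_Icc.mpr ⟨card_sdiff_pos_of_card_eq_of_ne (hA.trans hB.symm) hne,
    hA ▸ card_le_card sdiff_subset⟩, ?_⟩
  rw [dist_charVec, card_symmDiff_of_card_eq (hA.trans hB.symm), Nat.cast_mul, Nat.cast_ofNat]

theorem dist_set_charVec_image_subset [Fintype ι] (s : ℕ) :
    {d : ℝ | ∃ p₁ ∈ charVec '' {A : Finset ι | #A = s}, ∃ p₂ ∈ charVec '' {A | #A = s},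
      p₁ ≠ p₂ ∧ d = dist p₁ p₂} ⊆
      (fun k : ℕ => √(2 * k)) '' ↑(Icc 1 s) := by
  rintro d ⟨-, ⟨A, hA, rfl⟩, -, ⟨B, hB, rfl⟩, hne, rfl⟩
  obtain ⟨k, hk, hdist⟩ := dist_charVec_of_card_eq hA hB (ne_of_apply_ne _ hne)
  exact ⟨k, hk, hdist.symm⟩

end CharVec

theorem stmt_4_general (n s : ℕ)
    (F : Set (EuclideanSpace ℝ (Fin n)))
    (hF : F = {v | ∃ A : Finset (Fin n), A.card = s ∧
      v = WithLp.toLp 2 (fun i => if i ∈ A then (1 : ℝ) else 0)}) :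
    F.ncard = n.choose s ∧
    {d : ℝ | ∃ p₁ ∈ F, ∃ p₂ ∈ F, p₁ ≠ p₂ ∧ d = dist p₁ p₂}.ncard ≤ s := by
  have hFim : F = charVec '' {A | #A = s} := by
    ext v
    simp [hF, charVec, eq_comm]
  subst hFim
  constructor
  · rw [Set.ncard_image_of_injective _ charVec_injective, ncard_setOf_card_eq, Fintype.card_fin]
  · calc _ ≤ ((fun k : ℕ => √(2 * k)) '' ↑(Icc 1 s)).ncard :=
          Set.ncard_le_ncard (dist_set_charVec_image_subset s) (Set.toFinite _)
      _ ≤ (↑(Icc 1 s) : Set ℕ).ncard := Set.ncard_image_le (Set.toFinite _)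
      _ = s := by rw [Set.ncard_coe_finset, Nat.card_Icc, Nat.add_sub_cancel]

theorem stmt_4 (n s : ℕ) (hs : 1 ≤ s) (hsn : s ≤ n)
    (F : Set (EuclideanSpace ℝ (Fin n)))
    (hF : F = {v | ∃ A : Finset (Fin n), A.card = s ∧
      v = WithLp.toLp 2 (fun i => if i ∈ A then (1 : ℝ) else 0)}) :
    F.ncard = n.choose s ∧
    {d : ℝ | ∃ p₁ ∈ F, ∃ p₂ ∈ F, p₁ ≠ p₂ ∧ d = dist p₁ p₂}.ncard ≤ s :=
  stmt_4_general n s F hF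
end

section
/- Let F be a field and let A_1, ..., A_n ⊆ F each have size t > 0. Let S ⊆ A_1 × ... × A_n be a finite subset. Suppose there is a polynomial P in 2n variables over F with P(a, a) ≠ 0 for all a ∈ S and P(a, b) = 0 for all distinct a, b ∈ S. Let d := 2n(t−1)/deg(P). Then |S| ≤ 2 · (t · J(t, d))^n, where J(t,d) := (1/t) inf_{0<x<1} ((1−x^t)/(1−x)) x^{−(t−1)/d}. -/
noncomputable def J (t : ℕ) (d : ℝ) : ℝ :=
  (1 / t) * sInf {y : ℝ | ∃ x : ℝ, 0 < x ∧ x < 1 ∧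
    y = (1 - x ^ t) / (1 - x) * x ^ (-(((t : ℝ) - 1) / d))}

/-!
The matrix `(P(a, b))_{a, b ∈ S}` is diagonal with nonzero diagonal, so it has rank `|S|`.
Every monomial of `P` has `a`-degree or `b`-degree at most `deg P / 2`; splitting the monomials
accordingly writes the matrix as a sum of two matrices whose columns, resp. rows, lie in the
space `W` of functions on `S` given by polynomials of degree at most `deg P / 2`, hence
`|S| ≤ 2 dim W`. On `A_1 × ⋯ × A_n` the power `x_i ^ e` agrees with its remainder modulo
`∏_{c ∈ A_i} (X - c)`, so `dim W` is at most the number `M` of exponent vectors in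
`{0, …, t - 1}ⁿ` of degree at most `deg P / 2`. Finally, for `0 < x < 1`,
`M x ^ (deg P / 2) ≤ (1 + x + ⋯ + x ^ (t - 1))ⁿ`, and the infimum over `x` is `(t J(t, d))ⁿ`.
-/

open Finset

section SliceRank

open Matrix

variable {X K ι : Type*} [Fintype X] [Field K]

theorem Matrix.rank_add_le_s9 {m : Type*} [Finite m] (A B : Matrix m X K) :
    (A + B).rank ≤ A.rank + B.rank := by
  unfold Matrix.rank
  rw [Matrix.mulVecLin_add]
  exact (Submodule.finrank_mono (LinearMap.range_add_le _ _)).trans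
    (Submodule.finrank_add_le_finrank_add_finrank _ _)

theorem Matrix.rank_le_finrank_of_col_mem {m : Type*} [Finite m] (A : Matrix m X K)
    (W : Submodule K (m → K)) (hW : ∀ j, A.col j ∈ W) : A.rank ≤ Module.finrank K W := by
  rw [Matrix.rank_eq_finrank_span_cols]
  exact Submodule.finrank_mono (Submodule.span_le.mpr (Set.range_subset_iff.mpr hW))

theorem rank_sum_vecMulVec_le (T : Finset ι) (φ ψ : ι → X → K) (W : Submodule K (X → K))
    (hφ : ∀ s ∈ T, φ s ∈ W) : (∑ s ∈ T, vecMulVec (φ s) (ψ s)).rank ≤ Module.finrank K W := by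
  refine Matrix.rank_le_finrank_of_col_mem _ W fun b => ?_
  have hcol : (∑ s ∈ T, vecMulVec (φ s) (ψ s)).col b = ∑ s ∈ T, ψ s b • φ s := by
    ext a
    simp [Matrix.sum_apply, vecMulVec_apply, mul_comm]
  rw [hcol]
  exact W.sum_mem fun s hs => W.smul_mem _ (hφ s hs)

theorem card_le_two_mul_finrank (T : Finset ι) (φ ψ : ι → X → K) (W : Submodule K (X → K))
    (hW : ∀ s ∈ T, φ s ∈ W ∨ ψ s ∈ W) (hdiag : ∀ a, ∑ s ∈ T, φ s a * ψ s a ≠ 0)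
    (hoff : ∀ a b, a ≠ b → ∑ s ∈ T, φ s a * ψ s b = 0) :
    Fintype.card X ≤ 2 * Module.finrank K W := by
  classical
  have hB : ∑ s ∈ T, vecMulVec (φ s) (ψ s) = diagonal fun a => ∑ s ∈ T, φ s a * ψ s a := by
    ext a b
    rcases eq_or_ne a b with rfl | hab
    · simp [Matrix.sum_apply, vecMulVec_apply]
    · simp [Matrix.sum_apply, vecMulVec_apply, hab, hoff a b hab]
  have hrank : (∑ s ∈ T, vecMulVec (φ s) (ψ s)).rank = Fintype.card X := by
    rw [hB, rank_diagonal, Fintype.card_subtype_compl, Fintype.card_subtype,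
      filter_false_of_mem fun a _ => hdiag a]
    simp
  have hφ := rank_sum_vecMulVec_le (T.filter (φ · ∈ W)) φ ψ W fun s hs => (mem_filter.mp hs).2
  have hψ := rank_sum_vecMulVec_le (T.filter (φ · ∉ W)) ψ φ W fun s hs =>
    ((mem_filter.mp hs).1 |> hW s).resolve_left (mem_filter.mp hs).2
  rw [← rank_transpose, transpose_sum] at hψ
  simp only [transpose_vecMulVec] at hψ
  rw [← sum_filter_add_sum_filter_not T (φ · ∈ W)] at hrank
  have := Matrix.rank_add_le_s9 (∑ s ∈ T with φ s ∈ W, vecMulVec (φ s) (ψ s))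
    (∑ s ∈ T with φ s ∉ W, vecMulVec (φ s) (ψ s))
  omega

end SliceRank

section Reduction

variable {F σ : Type*} [Field F] [Fintype σ]

open Polynomial in
theorem exists_pow_eq_sum_range_min (A : Finset F) (e : ℕ) :
    ∃ c : ℕ → F, ∀ z ∈ A, z ^ e = ∑ k ∈ range (min (e + 1) #A), c k * z ^ k := by
  set p : F[X] := ∏ z ∈ A, (X - C z)
  have hp : p.Monic := monic_prod_X_sub_C id A
  have hpdeg : p.natDegree = #A := natDegree_finsetProd_X_sub_C_eq_card A id
  set q := X ^ e %ₘ p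
  refine ⟨q.coeff, fun z hz => ?_⟩
  have hroot : p.eval z = 0 := by
    rw [eval_prod]
    exact prod_eq_zero hz (by simp)
  have hq : q.eval z = z ^ e := by
    simpa [hroot] using congrArg (eval z) (modByMonic_add_div (X ^ e) p)
  have hqdeg : q.natDegree < min (e + 1) #A := by
    refine lt_min (Nat.lt_succ_of_le (natDegree_modByMonic_le_left.trans (by simp))) ?_
    have hp1 : p ≠ 1 := by
      rintro h
      rw [h, natDegree_one] at hpdeg
      exact card_ne_zero_of_mem hz hpdeg.symm
    exact hpdeg ▸ natDegree_modByMonic_lt _ hp hp1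
  rw [← hq, eval_eq_sum_range' hqdeg]

def monomialFn (S : Finset (σ → F)) (u : σ → ℕ) : S → F :=
  fun a => ∏ i, (a : σ → F) i ^ u i

theorem monomialFn_mem_span_of_mem_pi {A : σ → Finset F} {t : ℕ} (hA : ∀ i, #(A i) ≤ t)
    {S : Finset (σ → F)} (hS : ∀ a ∈ S, ∀ i, a i ∈ A i) (u : σ → ℕ) :
    monomialFn S u ∈ Submodule.span F (monomialFn S '' {v | ∀ i, v i ≤ u i ∧ v i < t}) := by
  classical
  choose c hc using fun i => exists_pow_eq_sum_range_min (A i) (u i)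
  have hexpand : monomialFn S u = ∑ v ∈ Fintype.piFinset fun i => range (min (u i + 1) #(A i)),
      (∏ i, c i (v i)) • monomialFn S v := by
    ext a
    simp only [monomialFn, Finset.sum_apply, Pi.smul_apply, smul_eq_mul, ← prod_mul_distrib]
    rw [prod_congr rfl fun i _ => hc i _ (hS a a.2 i), prod_univ_sum]
  rw [hexpand]
  refine Submodule.sum_mem _ fun v hv => Submodule.smul_mem _ _ (Submodule.subset_span ?_)
  refine ⟨v, fun i => ?_, rfl⟩
  have hvi := Fintype.mem_piFinset.mp hv i
  simp only [mem_range, lt_min_iff] at hvi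
  have := hA i
  omega

theorem finrank_span_monomialFn_le [DecidableEq σ] {A : σ → Finset F} {t : ℕ}
    (hA : ∀ i, #(A i) ≤ t) {S : Finset (σ → F)} (hS : ∀ a ∈ S, ∀ i, a i ∈ A i) (m : ℕ) :
    Module.finrank F (Submodule.span F (monomialFn S '' {u | ∑ i, u i ≤ m})) ≤
      #{u : σ → Fin t | ∑ i, (u i : ℕ) ≤ m} := by
  classical
  set R : Finset (σ → Fin t) := {u | ∑ i, (u i : ℕ) ≤ m}
  have hle : Submodule.span F (monomialFn S '' {u | ∑ i, u i ≤ m}) ≤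
      Submodule.span F ↑(R.image fun u => monomialFn S fun i => u i) := by
    rw [Submodule.span_le]
    rintro _ ⟨u, hu, rfl⟩
    refine Submodule.span_mono ?_ (monomialFn_mem_span_of_mem_pi hA hS u)
    rintro _ ⟨v, hv, rfl⟩
    refine mem_image.mpr ⟨fun i => ⟨v i, (hv i).2⟩, ?_, rfl⟩
    simp only [R, mem_filter, mem_univ, true_and]
    exact (sum_le_sum fun i _ => (hv i).1).trans hu
  exact (Submodule.finrank_mono hle).trans ((finrank_span_finset_le_card _).trans card_image_le)

theorem eval_sumElim_eq_sum (S : Finset (σ → F)) (P : MvPolynomial (σ ⊕ σ) F) (a b : S) :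
    MvPolynomial.eval (Sum.elim (a : σ → F) b) P = ∑ s ∈ P.support,
      (P.coeff s • monomialFn S fun i => s (.inl i)) a * monomialFn S (fun i => s (.inr i)) b := by
  rw [MvPolynomial.eval_eq']
  refine sum_congr rfl fun s _ => ?_
  simp [monomialFn, Fintype.prod_sum_type, mul_assoc]

theorem card_le_two_mul_card_of_eval_sumElim [DecidableEq σ] {A : σ → Finset F} {t : ℕ}
    (hA : ∀ i, #(A i) ≤ t) {S : Finset (σ → F)} (hS : ∀ a ∈ S, ∀ i, a i ∈ A i)
    (P : MvPolynomial (σ ⊕ σ) F)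
    (hdiag : ∀ a ∈ S, MvPolynomial.eval (Sum.elim a a) P ≠ 0)
    (hoff : ∀ a ∈ S, ∀ b ∈ S, a ≠ b → MvPolynomial.eval (Sum.elim a b) P = 0) :
    #S ≤ 2 * #{u : σ → Fin t | ∑ i, (u i : ℕ) ≤ P.totalDegree / 2} := by
  set W := Submodule.span F (monomialFn S '' {u | ∑ i, u i ≤ P.totalDegree / 2})
  have hsplit : ∀ s ∈ P.support, ∑ i, s (.inl i) ≤ P.totalDegree / 2 ∨
      ∑ i, s (.inr i) ≤ P.totalDegree / 2 := by
    intro s hs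
    have := MvPolynomial.le_totalDegree hs
    rw [Finsupp.sum_fintype _ _ fun _ => rfl, Fintype.sum_sum_type] at this
    omega
  have hcard := card_le_two_mul_finrank P.support
    (fun s => P.coeff s • monomialFn S fun i => s (.inl i))
    (fun s => monomialFn S fun i => s (.inr i)) W
    (fun s hs => (hsplit s hs).imp (fun h => W.smul_mem _ (Submodule.subset_span ⟨_, h, rfl⟩))
      fun h => Submodule.subset_span ⟨_, h, rfl⟩)
    (fun a => by rw [← eval_sumElim_eq_sum]; exact hdiag a a.2)
    (fun a b hab => by
      rw [← eval_sumElim_eq_sum]; exact hoff a a.2 b b.2 (Subtype.coe_injective.ne hab))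
  rw [Fintype.card_coe] at hcard
  exact hcard.trans (Nat.mul_le_mul_left 2 (finrank_span_monomialFn_le hA hS _))

end Reduction

theorem sum_pow_sum_eq_geom_sum_pow {R ι : Type*} [CommSemiring R] [Fintype ι] [DecidableEq ι]
    (t : ℕ) (x : R) :
    ∑ u : ι → Fin t, x ^ ∑ i, (u i : ℕ) = (∑ k ∈ range t, x ^ k) ^ Fintype.card ι := by
  rw [← Fin.sum_univ_eq_sum_range, ← card_univ, ← prod_const, Fintype.prod_sum]
  simp_rw [prod_pow_eq_pow_sum]

theorem card_mul_rpow_le_geom_sum_pow {ι : Type*} [Fintype ι] [DecidableEq ι] {t : ℕ}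
    (s : Finset (ι → Fin t)) {x e : ℝ} (hx0 : 0 < x) (hx1 : x ≤ 1)
    (he : ∀ u ∈ s, ((∑ i, (u i : ℕ) : ℕ) : ℝ) ≤ e) :
    #s * x ^ e ≤ (∑ k ∈ range t, x ^ k) ^ Fintype.card ι := by
  rw [← sum_pow_sum_eq_geom_sum_pow]
  calc #s * x ^ e = ∑ _u ∈ s, x ^ e := by rw [sum_const, nsmul_eq_mul]
    _ ≤ ∑ u ∈ s, x ^ ∑ i, (u i : ℕ) := by
      refine sum_le_sum fun u hu => ?_
      simpa only [Real.rpow_natCast] using Real.rpow_le_rpow_of_exponent_ge hx0 hx1 (he u hu)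
    _ ≤ ∑ u : ι → Fin t, x ^ ∑ i, (u i : ℕ) := by
      apply sum_le_univ_sum_of_nonneg
      intro
      positivity

theorem sum_le_mul_div_of_sum_le_div_two {n t D : ℕ} (u : Fin n → Fin t)
    (hu : ∑ i, (u i : ℕ) ≤ D / 2) :
    ((∑ i, (u i : ℕ) : ℕ) : ℝ) ≤ n * ((t - 1) / (2 * n * (t - 1) / D)) := by
  have hbox : ((∑ i, (u i : ℕ) : ℕ) : ℝ) ≤ n * (t - 1) := by
    have hlt : ∀ i, (u i : ℝ) + 1 ≤ t := fun i => by exact_mod_cast (u i).isLt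
    push_cast
    calc ∑ i, (u i : ℝ) ≤ ∑ _i : Fin n, ((t : ℝ) - 1) :=
          sum_le_sum fun i _ => by linarith [hlt i]
      _ = n * (t - 1) := by simp [mul_sub]
  by_cases h : (n : ℝ) * (t - 1) = 0
  · rcases mul_eq_zero.mp h with h | h <;> simp_all
  · have hn : (n : ℝ) ≠ 0 := left_ne_zero_of_mul h
    have ht1 : (t : ℝ) - 1 ≠ 0 := right_ne_zero_of_mul h
    have hhalf : (n : ℝ) * ((t - 1) * D) / (2 * n * (t - 1)) = D / 2 := by field_simp
    rw [div_div_eq_mul_div, mul_div_assoc', hhalf]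
    exact (Nat.cast_le.mpr hu).trans Nat.cast_div_le

theorem le_csInf_pow {Y : Set ℝ} (hY : Y.Nonempty) {c : ℝ} (hc : 0 ≤ c) (n : ℕ)
    (h : ∀ y ∈ Y, 0 ≤ y ∧ c ≤ y ^ n) : c ≤ sInf Y ^ n := by
  rcases n.eq_zero_or_pos with rfl | hn
  · obtain ⟨y, hy⟩ := hY
    simpa using (h y hy).2
  have hroot : c ^ (n⁻¹ : ℝ) ≤ sInf Y := le_csInf hY fun y hy =>
    (Real.rpow_le_rpow hc (h y hy).2 (by positivity)).trans_eq
      (Real.pow_rpow_inv_natCast (h y hy).1 hn.ne')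
  calc c = (c ^ (n⁻¹ : ℝ)) ^ n := (Real.rpow_inv_natCast_pow hc hn.ne').symm
    _ ≤ sInf Y ^ n := pow_le_pow_left₀ (Real.rpow_nonneg hc _) hroot n

theorem natCast_mul_J {t : ℕ} (ht : t ≠ 0) (d : ℝ) :
    t * J t d = sInf {y : ℝ | ∃ x : ℝ, 0 < x ∧ x < 1 ∧
      y = (∑ k ∈ range t, x ^ k) * x ^ (-(((t : ℝ) - 1) / d))} := by
  rw [J, ← mul_assoc, mul_one_div_cancel (Nat.cast_ne_zero.mpr ht), one_mul]
  congr 1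
  ext y
  refine exists_congr fun x => and_congr_right fun _ => and_congr_right fun hx1 => ?_
  rw [geom_sum_eq hx1.ne, ← neg_div_neg_eq, neg_sub, neg_sub]

theorem card_le_natCast_mul_J_pow {n t : ℕ} (ht : 0 < t) (D : ℕ) :
    (#{u : Fin n → Fin t | ∑ i, (u i : ℕ) ≤ D / 2} : ℝ) ≤
      (t * J t (2 * n * (t - 1) / D)) ^ n := by
  rw [natCast_mul_J ht.ne']
  refine le_csInf_pow ?_ (Nat.cast_nonneg _) n ?_
  · exact ⟨_, 1 / 2, by norm_num, by norm_num, rfl⟩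
  rintro _ ⟨x, hx0, hx1, rfl⟩
  refine ⟨by positivity, ?_⟩
  have hcount := card_mul_rpow_le_geom_sum_pow {u : Fin n → Fin t | ∑ i, (u i : ℕ) ≤ D / 2}
    hx0 hx1.le fun u hu => sum_le_mul_div_of_sum_le_div_two (D := D) u (mem_filter.mp hu).2
  rw [Fintype.card_fin, ← le_div_iff₀ (by positivity), div_eq_mul_inv, ← Real.rpow_neg hx0.le]
    at hcount
  rwa [mul_pow, ← Real.rpow_natCast (x ^ _), ← Real.rpow_mul hx0.le, neg_mul, mul_comm _ (n : ℝ)]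

theorem stmt_9 {F : Type*} [Field F] (n t : ℕ) (ht : 0 < t)
    (A : Fin n → Finset F) (hA : ∀ i, (A i).card = t)
    (S : Finset (Fin n → F)) (hS : ∀ a ∈ S, ∀ i, a i ∈ A i)
    (P : MvPolynomial (Fin n ⊕ Fin n) F)
    (hdiag : ∀ a ∈ S, MvPolynomial.eval (Sum.elim a a) P ≠ 0)
    (hoff : ∀ a ∈ S, ∀ b ∈ S, a ≠ b → MvPolynomial.eval (Sum.elim a b) P = 0) :
    (S.card : ℝ) ≤ 2 * ((t : ℝ) * J t (2 * n * (t - 1) / P.totalDegree)) ^ n := by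
  calc (S.card : ℝ) ≤ 2 * #{u : Fin n → Fin t | ∑ i, (u i : ℕ) ≤ P.totalDegree / 2} := by
        exact_mod_cast card_le_two_mul_card_of_eval_sumElim (fun i => (hA i).le) hS P hdiag hoff
    _ ≤ 2 * ((t : ℝ) * J t (2 * n * (t - 1) / P.totalDegree)) ^ n := by
        gcongr
        exact card_le_natCast_mul_J_pow ht _
end

section
/- Let A_1, ..., A_n be subsets of ℝ, each of size q ≥ 2, and B = A_1 × ... × A_n. Suppose F ⊆ B satisfies |d(F)| ≤ s, where d(F) is the set of distances between distinct points of F. Let d := n(q−1)/s. Then |F| ≤ 2 · (q · J(q, d))^n, where J(q, d) := (1/q) inf_{0<x<1} ((1−x^q)/(1−x)) x^{−(q−1)/d}. -/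
open Finset Module

def distSet {X : Type*} [PseudoMetricSpace X] (F : Set X) : Set ℝ :=
  {d : ℝ | ∃ p₁ ∈ F, ∃ p₂ ∈ F, p₁ ≠ p₂ ∧ d = dist p₁ p₂}

theorem Set.Finite.distSet {X : Type*} [PseudoMetricSpace X] {F : Set X} (hF : F.Finite) :
    (distSet F).Finite :=
  ((hF.prod hF).image fun z => dist z.1 z.2).subset <| by
    rintro _ ⟨p₁, h₁, p₂, h₂, -, rfl⟩
    exact ⟨(p₁, p₂), ⟨h₁, h₂⟩, rfl⟩

theorem dist_mem_distSet {X : Type*} [PseudoMetricSpace X] {F : Set X} {p₁ p₂ : X}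
    (h₁ : p₁ ∈ F) (h₂ : p₂ ∈ F) (hne : p₁ ≠ p₂) : dist p₁ p₂ ∈ distSet F :=
  ⟨p₁, h₁, p₂, h₂, hne, rfl⟩

theorem zero_notMem_distSet {X : Type*} [MetricSpace X] (F : Set X) : 0 ∉ distSet F := by
  rintro ⟨p₁, -, p₂, -, hne, h⟩
  exact dist_ne_zero.2 hne h.symm

namespace GridDistanceSet

variable {ι : Type*} [Fintype ι]

def monomialFn {R : Type*} [CommSemiring R] (a : ι → ℕ) (x : ι → R) : R := ∏ i, x i ^ a i

open Polynomial in
theorem exists_pow_eq_sum_lt_card {K : Type*} [Field K] {A : Finset K} {q : ℕ} (hA : #A = q)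
    (e : ℕ) :
    ∃ c : Fin q → K, (∀ j : Fin q, e < j → c j = 0) ∧
      ∀ x ∈ A, x ^ e = ∑ j, c j * x ^ (j : ℕ) := by
  subst hA
  set P := Lagrange.nodal A id
  set r := (X ^ e : K[X]) %ₘ P
  refine ⟨fun j => r.coeff j, fun j hj => ?_, fun x hx => ?_⟩
  · have he : e < #A := hj.trans j.2
    have hr : r = X ^ e := (modByMonic_eq_self_iff Lagrange.nodal_monic).2 <| by
      rw [degree_X_pow, Lagrange.degree_nodal]; exact_mod_cast he
    simp [hr, coeff_X_pow, hj.ne']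
  · have hP : P.natDegree = #A := Lagrange.natDegree_nodal
    have hr : r.natDegree < #A := hP ▸ natDegree_modByMonic_lt _ Lagrange.nodal_monic
      (fun h => by rw [h, natDegree_one] at hP; exact (card_ne_zero_of_mem hx) hP.symm)
    have hPx : P.eval x = 0 := Lagrange.eval_nodal_at_node (v := id) hx
    calc x ^ e = (r + P * ((X ^ e : K[X]) /ₘ P)).eval x := by
          rw [modByMonic_add_div]; simp
      _ = r.eval x := by simp [hPx]
      _ = ∑ j : Fin #A, r.coeff j * x ^ (j : ℕ) := by
          rw [eval_eq_sum_range' hr, Fin.sum_univ_eq_sum_range (fun j => r.coeff j * x ^ j)]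

section Polynomial

open MvPolynomial

theorem eval_sumElim_eq_sum {R : Type*} [CommSemiring R] (P : MvPolynomial (ι ⊕ ι) R)
    (x y : ι → R) :
    eval (Sum.elim x y) P =
      ∑ m ∈ P.support, coeff m P * monomialFn (m ∘ .inl) x * monomialFn (m ∘ .inr) y := by
  rw [eval_eq']
  refine sum_congr rfl fun m _ => ?_
  rw [Fintype.prod_sum_type, mul_assoc]
  rfl

theorem sum_comp_inl_add_sum_comp_inr_le {R : Type*} [CommSemiring R]
    {P : MvPolynomial (ι ⊕ ι) R} {m : ι ⊕ ι →₀ ℕ} (hm : m ∈ P.support) :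
    ∑ i, m (.inl i) + ∑ i, m (.inr i) ≤ P.totalDegree := by
  calc _ = m.sum fun _ e => e := by rw [Finsupp.sum_fintype _ _ fun _ => rfl, Fintype.sum_sum_type]
    _ ≤ P.totalDegree := le_totalDegree hm

variable (ι) in
noncomputable def distSqPoly : MvPolynomial (ι ⊕ ι) ℝ := ∑ i, (X (.inl i) - X (.inr i)) ^ 2

theorem eval_distSqPoly (x y : EuclideanSpace ℝ ι) :
    eval (Sum.elim x.ofLp y.ofLp) (distSqPoly ι) = dist x y ^ 2 := by
  rw [EuclideanSpace.dist_eq, Real.sq_sqrt (by positivity)]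
  simp [distSqPoly, Real.dist_eq, sq_abs]

theorem totalDegree_distSqPoly_le : (distSqPoly ι).totalDegree ≤ 2 := by
  refine (totalDegree_finsetSum _ _).trans (Finset.sup_le fun i _ => ?_)
  refine (totalDegree_pow _ _).trans ?_
  have : (X (.inl i) - X (.inr i) : MvPolynomial (ι ⊕ ι) ℝ).totalDegree ≤ 1 :=
    (totalDegree_sub _ _).trans (by simp [totalDegree_X])
  omega

theorem totalDegree_prod_distSqPoly_sub_le (D : Finset ℝ) :
    (∏ r ∈ D, (distSqPoly ι - C (r ^ 2))).totalDegree ≤ 2 * #D := by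
  refine (totalDegree_finsetProd _ _).trans ?_
  rw [mul_comm, ← smul_eq_mul, ← sum_const]
  exact sum_le_sum fun r _ => (totalDegree_sub_C_le _ _).trans totalDegree_distSqPoly_le

theorem eval_prod_distSqPoly_sub (D : Finset ℝ) (x y : EuclideanSpace ℝ ι) :
    eval (Sum.elim x.ofLp y.ofLp) (∏ r ∈ D, (distSqPoly ι - C (r ^ 2))) =
      ∏ r ∈ D, (dist x y ^ 2 - r ^ 2) := by
  simp [eval_distSqPoly]

end Polynomial

variable [DecidableEq ι]

theorem exists_monomialFn_eq_sum_on_grid {K : Type*} [Field K] {q : ℕ} {A : ι → Finset K}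
    (hA : ∀ i, #(A i) = q) (a : ι → ℕ) :
    ∃ c : (ι → Fin q) → K, (∀ b, c b ≠ 0 → ∑ i, (b i : ℕ) ≤ ∑ i, a i) ∧
      ∀ x : ι → K, (∀ i, x i ∈ A i) →
        monomialFn a x = ∑ b, c b * monomialFn (Fin.val ∘ b) x := by
  choose c hc_zero hc_eq using fun i => exists_pow_eq_sum_lt_card (hA i) (a i)
  refine ⟨fun b => ∏ i, c i (b i), fun b hb => sum_le_sum fun i _ => ?_, fun x hx => ?_⟩
  · by_contra! h
    exact hb (prod_eq_zero (mem_univ i) (hc_zero i _ h))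
  · calc monomialFn a x = ∏ i, ∑ j, c i j * x i ^ (j : ℕ) :=
          prod_congr rfl fun i _ => hc_eq i _ (hx i)
      _ = ∑ b : ι → Fin q, ∏ i, c i (b i) * x i ^ (b i : ℕ) := by
          rw [prod_univ_sum, Fintype.piFinset_univ]
      _ = ∑ b, (∏ i, c i (b i)) * monomialFn (Fin.val ∘ b) x :=
          sum_congr rfl fun b _ => prod_mul_distrib

def reducedExponents (q s : ℕ) : Finset (ι → Fin q) := univ.filter fun b => ∑ i, (b i : ℕ) ≤ s

variable (F : Set (EuclideanSpace ℝ ι))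

def reducedSpan (q s : ℕ) : Submodule ℝ (F → ℝ) :=
  Submodule.span ℝ (Set.range fun b : reducedExponents q s => fun p : F =>
    monomialFn (Fin.val ∘ b.1) (p : EuclideanSpace ℝ ι).ofLp)

theorem finrank_reducedSpan_le (q s : ℕ) :
    finrank ℝ (reducedSpan F q s) ≤ #(reducedExponents (ι := ι) q s) :=
  (finrank_range_le_card _).trans_eq (Fintype.card_coe _)

variable {F}

theorem monomialFn_mem_reducedSpan {q s : ℕ} {A : ι → Finset ℝ}
    (hA : ∀ i, #(A i) = q) (hFA : ∀ p ∈ F, ∀ i, p i ∈ A i) {a : ι → ℕ} (ha : ∑ i, a i ≤ s) :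
    (fun p : F => monomialFn a (p : EuclideanSpace ℝ ι).ofLp) ∈ reducedSpan F q s := by
  obtain ⟨c, hc_deg, hc_eq⟩ := exists_monomialFn_eq_sum_on_grid hA a
  have hsum : (fun p : F => monomialFn a (p : EuclideanSpace ℝ ι).ofLp) =
      ∑ b, c b • fun p : F => monomialFn (Fin.val ∘ b) (p : EuclideanSpace ℝ ι).ofLp := by
    ext p
    simp [hc_eq _ (hFA p p.2)]
  rw [hsum]
  refine Submodule.sum_mem _ fun b _ => ?_
  by_cases hb : c b = 0
  · simp [hb]
  · refine Submodule.smul_mem _ _ (Submodule.subset_span ⟨⟨b, ?_⟩, rfl⟩)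
    simpa [reducedExponents] using (hc_deg b hb).trans ha

section Rank

variable {m n K : Type*} [Fintype n] [Field K]

theorem rank_add_le (M N : Matrix m n K) : (M + N).rank ≤ M.rank + N.rank := by
  have hrange : LinearMap.range (M + N).mulVecLin ≤
      LinearMap.range M.mulVecLin ⊔ LinearMap.range N.mulVecLin := by
    rintro _ ⟨v, rfl⟩
    rw [Matrix.mulVecLin_add]
    exact Submodule.add_mem_sup (LinearMap.mem_range_self _ v) (LinearMap.mem_range_self _ v)
  exact (Submodule.finrank_mono hrange).trans (Submodule.finrank_add_le_finrank_add_finrank _ _)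

theorem rank_le_finrank_of_col_mem [Fintype m] (M : Matrix m n K) {W : Submodule K (m → K)}
    (hW : ∀ j, M.col j ∈ W) : M.rank ≤ finrank K W := by
  rw [M.rank_eq_finrank_span_cols]
  exact Submodule.finrank_mono (Submodule.span_le.2 (Set.range_subset_iff.2 hW))

/-- Split the sum according to whether `u k ∈ W`: the first part has its columns in `W`, the
second its rows. -/
theorem rank_le_two_mul_finrank_of_eq_sum [Fintype m] {κ : Type*} (M : Matrix m m K)
    (W : Submodule K (m → K)) (T : Finset κ) (u v : κ → m → K) (huv : ∀ k ∈ T, u k ∈ W ∨ v k ∈ W)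
    (hM : ∀ i j, M i j = ∑ k ∈ T, u k i * v k j) :
    M.rank ≤ 2 * finrank K W := by
  classical
  let M₁ : Matrix m m K := .of fun i j => ∑ k ∈ T with u k ∈ W, u k i * v k j
  let M₂ : Matrix m m K := .of fun i j => ∑ k ∈ T with u k ∉ W, u k i * v k j
  have hsplit : M = M₁ + M₂ := by
    ext i j
    simp [M₁, M₂, hM, sum_filter_add_sum_filter_not]
  have h₁ : M₁.rank ≤ finrank K W := rank_le_finrank_of_col_mem _ fun j => by
    have : M₁.col j = ∑ k ∈ T with u k ∈ W, v k j • u k := by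
      ext i; simp [M₁, Matrix.col, mul_comm]
    rw [this]
    exact Submodule.sum_mem _ fun k hk => Submodule.smul_mem _ _ (mem_filter.1 hk).2
  have h₂ : M₂.rank ≤ finrank K W := by
    rw [← Matrix.rank_transpose]
    refine rank_le_finrank_of_col_mem _ fun i => ?_
    have : M₂.transpose.col i = ∑ k ∈ T with u k ∉ W, u k i • v k := by
      ext j; simp [M₂, Matrix.col]
    rw [this]
    refine Submodule.sum_mem _ fun k hk => Submodule.smul_mem _ _ ?_
    obtain ⟨hkT, hk⟩ := mem_filter.1 hk
    exact (huv k hkT).resolve_left hk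
  rw [hsplit]
  exact (rank_add_le _ _).trans (by omega)

end Rank

theorem rank_of_prod_dist_sq_sub {P : Type*} [Fintype P] [MetricSpace P] {D : Finset ℝ}
    (hD : ∀ p p' : P, p ≠ p' → dist p p' ∈ D) (h0 : 0 ∉ D) :
    (Matrix.of fun p p' : P => ∏ r ∈ D, (dist p p' ^ 2 - r ^ 2)).rank = Fintype.card P := by
  classical
  have hdiag : (Matrix.of fun p p' : P => ∏ r ∈ D, (dist p p' ^ 2 - r ^ 2)) =
      Matrix.diagonal fun _ => ∏ r ∈ D, (0 - r ^ 2) := by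
    ext p p'
    by_cases h : p = p'
    · simp [h]
    · simpa [h] using prod_eq_zero (hD p p' h) (by ring)
  have hne : ∏ r ∈ D, (0 - r ^ 2) ≠ 0 :=
    prod_ne_zero_iff.2 fun r hr => by simpa using ne_of_mem_of_not_mem hr h0
  rw [hdiag, Matrix.rank_diagonal]
  exact Fintype.card_congr (Equiv.subtypeUnivEquiv fun _ => hne)

theorem rank_prod_dist_sq_sub_le {q s : ℕ} {A : ι → Finset ℝ} (hA : ∀ i, #(A i) = q)
    {F : Set (EuclideanSpace ℝ ι)} [Fintype F] (hFA : ∀ p ∈ F, ∀ i, p i ∈ A i)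
    {D : Finset ℝ} (hD : #D ≤ s) :
    (Matrix.of fun p p' : F => ∏ r ∈ D, (dist p p' ^ 2 - r ^ 2)).rank ≤
      2 * finrank ℝ (reducedSpan F q s) := by
  set G := ∏ r ∈ D, (distSqPoly ι - MvPolynomial.C (r ^ 2))
  refine rank_le_two_mul_finrank_of_eq_sum _ _ G.support
    (fun m p => MvPolynomial.coeff m G * monomialFn (m ∘ .inl) (p : EuclideanSpace ℝ ι).ofLp)
    (fun m p => monomialFn (m ∘ .inr) (p : EuclideanSpace ℝ ι).ofLp) (fun m hm => ?_)
    fun p p' => by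
      rw [Matrix.of_apply, Subtype.dist_eq, ← eval_prod_distSqPoly_sub, eval_sumElim_eq_sum]
  have hdeg := (sum_comp_inl_add_sum_comp_inr_le hm).trans (totalDegree_prod_distSqPoly_sub_le D)
  by_cases hl : ∑ i, m (.inl i) ≤ s
  · exact .inl (Submodule.smul_mem _ _ (monomialFn_mem_reducedSpan hA hFA hl))
  · refine .inr (monomialFn_mem_reducedSpan hA hFA ?_)
    simp only [Function.comp_apply]
    omega

theorem ncard_le_two_mul_card_reducedExponents {q s : ℕ} {A : ι → Finset ℝ}
    (hA : ∀ i, #(A i) = q) {F : Set (EuclideanSpace ℝ ι)} (hF : F.Finite)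
    (hFA : ∀ p ∈ F, ∀ i, p i ∈ A i) (hdist : (distSet F).ncard ≤ s) :
    F.ncard ≤ 2 * #(reducedExponents (ι := ι) q s) := by
  have : Fintype F := hF.fintype
  have hrank := rank_prod_dist_sq_sub_le (s := s) (D := hF.distSet.toFinset) hA hFA
    (Set.ncard_eq_toFinset_card _ hF.distSet ▸ hdist)
  rw [rank_of_prod_dist_sq_sub (fun p p' h => by
    simpa [Subtype.dist_eq] using dist_mem_distSet p.2 p'.2 (Subtype.coe_ne_coe.2 h))
    (by simpa using zero_notMem_distSet F)] at hrank
  calc F.ncard = Fintype.card F := by rw [← Nat.card_coe_set_eq, Nat.card_eq_fintype_card]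
    _ ≤ 2 * finrank ℝ (reducedSpan F q s) := hrank
    _ ≤ 2 * #(reducedExponents q s) := Nat.mul_le_mul_left 2 (finrank_reducedSpan_le F q s)

theorem card_reducedExponents_mul_pow_le (q s : ℕ) {x : ℝ} (hx₀ : 0 ≤ x) (hx₁ : x ≤ 1) :
    (#(reducedExponents (ι := ι) q s) : ℝ) * x ^ s ≤ (∑ j ∈ range q, x ^ j) ^ Fintype.card ι :=
  calc (#(reducedExponents (ι := ι) q s) : ℝ) * x ^ s
      = ∑ _b ∈ reducedExponents (ι := ι) q s, x ^ s := by rw [sum_const, nsmul_eq_mul]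
    _ ≤ ∑ b ∈ reducedExponents q s, x ^ ∑ i, (b i : ℕ) :=
        sum_le_sum fun b hb => pow_le_pow_of_le_one hx₀ hx₁ (mem_filter.1 hb).2
    _ ≤ ∑ b : ι → Fin q, x ^ ∑ i, (b i : ℕ) :=
        sum_le_sum_of_subset_of_nonneg (subset_univ _) fun _ _ _ => by positivity
    _ = ∏ _i : ι, ∑ j : Fin q, x ^ (j : ℕ) := by
        rw [prod_univ_sum, Fintype.piFinset_univ]
        exact sum_congr rfl fun b _ => (prod_pow_eq_pow_sum _ _ _).symm
    _ = (∑ j ∈ range q, x ^ j) ^ Fintype.card ι := by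
        rw [prod_const, card_univ, Fin.sum_univ_eq_sum_range (x ^ ·)]

theorem card_reducedExponents_le {q : ℕ} (hq : q ≠ 1) (s : ℕ) {x : ℝ} (hx₀ : 0 < x)
    (hx₁ : x < 1) :
    (#(reducedExponents (ι := ι) q s) : ℝ) ≤ ((1 - x ^ q) / (1 - x) *
      x ^ (-(((q : ℝ) - 1) / (Fintype.card ι * ((q : ℝ) - 1) / s)))) ^ Fintype.card ι := by
  rcases isEmpty_or_nonempty ι with hι | hι
  · simpa using card_le_univ (reducedExponents (ι := ι) q s)
  set n := Fintype.card ι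
  have hn : (n : ℝ) ≠ 0 := Nat.cast_ne_zero.2 Fintype.card_ne_zero
  have he : ((q : ℝ) - 1) / (n * ((q : ℝ) - 1) / s) * n = s := by
    rw [div_div_eq_mul_div, mul_comm (n : ℝ),
      mul_div_mul_left _ _ (sub_ne_zero.2 (Nat.cast_ne_one.2 hq)), div_mul_cancel₀ _ hn]
  calc (#(reducedExponents (ι := ι) q s) : ℝ)
      = #(reducedExponents (ι := ι) q s) * x ^ s * x ^ (-(s : ℝ)) := by
        rw [mul_assoc, Real.rpow_neg hx₀.le, Real.rpow_natCast, mul_inv_cancel₀ (by positivity),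
          mul_one]
    _ ≤ (∑ j ∈ range q, x ^ j) ^ n * x ^ (-(s : ℝ)) := by
        gcongr
        exact card_reducedExponents_mul_pow_le q s hx₀.le hx₁.le
    _ = _ := by
        rw [mul_pow, ← Real.rpow_mul_natCast hx₀.le, neg_mul, he, geom_sum_eq hx₁.ne,
          ← neg_sub 1 (x ^ q), ← neg_sub 1 x, neg_div_neg_eq]

theorem le_apply_csInf_of_forall_le {α β : Type*} [ConditionallyCompleteLinearOrder α]
    [TopologicalSpace α] [OrderTopology α] [TopologicalSpace β] [Preorder β]
    [OrderClosedTopology β] {S : Set α} {f : α → β} (hf : Continuous f) (hS : S.Nonempty)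
    (hb : BddBelow S) {c : β} (h : ∀ y ∈ S, c ≤ f y) : c ≤ f (sInf S) :=
  closure_minimal h (isClosed_le continuous_const hf) (csInf_mem_closure hS hb)

theorem card_reducedExponents_le_pow_mul_J {q : ℕ} (hq : 1 < q) (s : ℕ) :
    (#(reducedExponents (ι := ι) q s) : ℝ) ≤
      ((q : ℝ) * J q (Fintype.card ι * (q - 1) / s)) ^ Fintype.card ι := by
  set S := {y : ℝ | ∃ x : ℝ, 0 < x ∧ x < 1 ∧
    y = (1 - x ^ q) / (1 - x) * x ^ (-(((q : ℝ) - 1) / (Fintype.card ι * (q - 1) / s)))}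
  have hqJ : (q : ℝ) * J q (Fintype.card ι * (q - 1) / s) = sInf S := by
    rw [J, ← mul_assoc, mul_one_div_cancel (by positivity), one_mul]
  have hS : S.Nonempty := ⟨_, 1 / 2, by norm_num, by norm_num, rfl⟩
  have hS₀ : BddBelow S := ⟨0, by
    rintro _ ⟨x, hx₀, hx₁, rfl⟩
    exact mul_nonneg (div_nonneg (sub_nonneg.2 (pow_le_one₀ hx₀.le hx₁.le)) (by linarith))
      (Real.rpow_nonneg hx₀.le _)⟩
  rw [hqJ]
  refine le_apply_csInf_of_forall_le (continuous_pow _) hS hS₀ ?_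
  rintro _ ⟨x, hx₀, hx₁, rfl⟩
  exact card_reducedExponents_le hq.ne' s hx₀ hx₁

end GridDistanceSet

open GridDistanceSet in
theorem stmt_10 (n s q : ℕ) (hq : 2 ≤ q) (A : Fin n → Set ℝ)
    (hA : ∀ i, (A i).ncard = q)
    (F : Set (EuclideanSpace ℝ (Fin n))) (hF : F.Finite)
    (hFB : ∀ p ∈ F, ∀ i, p i ∈ A i)
    (hdist : {d : ℝ | ∃ p₁ ∈ F, ∃ p₂ ∈ F, p₁ ≠ p₂ ∧ d = dist p₁ p₂}.ncard ≤ s) :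
    (F.ncard : ℝ) ≤ 2 * ((q : ℝ) * J q (n * (q - 1) / s)) ^ n := by
  have hAfin : ∀ i, (A i).Finite := fun i => Set.finite_of_ncard_ne_zero (by rw [hA]; omega)
  have hcard : F.ncard ≤ 2 * #(reducedExponents (ι := Fin n) q s) :=
    ncard_le_two_mul_card_reducedExponents (A := fun i => (hAfin i).toFinset)
      (fun i => by rw [← Set.ncard_eq_toFinset_card _ (hAfin i), hA]) hF (by simpa using hFB) hdist
  have hN := card_reducedExponents_le_pow_mul_J (ι := Fin n) (by omega : 1 < q) s
  rw [Fintype.card_fin] at hN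
  calc (F.ncard : ℝ) ≤ 2 * #(reducedExponents (ι := Fin n) q s) := by exact_mod_cast hcard
    _ ≤ 2 * ((q : ℝ) * J q (n * (q - 1) / s)) ^ n := by linarith
end

section
/- Suppose F ⊆ ℝ^n is a finite set such that the set of inner products {⟨p_1, p_2⟩ : p_1, p_2 ∈ F, p_1 ≠ p_2} between distinct points of F has at most s elements. Then |F| ≤ C(n + s, s). -/
/-!
For `p ∈ F`, the polynomial `x ↦ ∏ (⟪x, p⟫ - a)`, the product running over the inner products
`a ≠ ‖p‖²` of distinct points of `F`, has degree at most `s` and does not vanish at `p`. It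
vanishes at every other `q ∈ F` with `‖q‖ ≤ ‖p‖`: then `⟪q, p⟫ < ‖p‖²`, so `⟪q, p⟫` is one of
the `a`. Ordered by norm, these polynomials thus have a triangular evaluation matrix on `F`,
so they are linearly independent in the space of polynomials of degree `≤ s` in `n` variables,
whose dimension is `(n + s).choose s`.
-/

open MvPolynomial Module Finset
open scoped InnerProductSpace

namespace Finsupp

noncomputable def sumLeEquivSumEq (n s : ℕ) :
    {d : Fin n →₀ ℕ // (d.sum fun _ e => e) ≤ s} ≃
      {e : Fin (n + 1) →₀ ℕ // (e.sum fun _ e => e) = s} where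
  toFun d := ⟨cons (s - d.1.sum fun _ e => e) d.1, by rw [sum_cons]; exact Nat.sub_add_cancel d.2⟩
  invFun e := ⟨tail e.1, by
    have h := e.2
    rw [← cons_tail e.1, sum_cons] at h
    omega⟩
  left_inv d := by simp [tail_cons]
  right_inv e := by
    have h := e.2
    rw [← cons_tail e.1, sum_cons] at h
    ext1
    simp only [← h, Nat.add_sub_cancel, cons_tail]

theorem natCard_sumLe (n s : ℕ) :
    Nat.card {d : Fin n →₀ ℕ // (d.sum fun _ e => e) ≤ s} = (n + s).choose s := by
  rw [Nat.card_congr ((sumLeEquivSumEq n s).trans (Sym.equivNatSum _ s).symm),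
    Nat.card_eq_fintype_card, Sym.card_sym_eq_choose, Fintype.card_fin, Nat.add_right_comm,
    Nat.add_sub_cancel]

end Finsupp

theorem MvPolynomial.finrank_restrictTotalDegree (R : Type*) [CommRing R] [StrongRankCondition R]
    (n s : ℕ) : finrank R (restrictTotalDegree (Fin n) R s) = (n + s).choose s :=
  (finrank_eq_nat_card_basis (basisRestrictSupport R _)).trans (Finsupp.natCard_sumLe n s)

theorem linearIndependent_of_triangular {ι R M α : Type*} [CommRing R] [NoZeroDivisors R]
    [AddCommGroup M] [Module R M] [LinearOrder α] (v : ι → M) (φ : ι → M →ₗ[R] R) (w : ι → α)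
    (hdiag : ∀ i, φ i (v i) ≠ 0) (hzero : ∀ i j, j ≠ i → w i ≤ w j → φ i (v j) = 0) :
    LinearIndependent R v := by
  classical
  rw [linearIndependent_iff']
  intro t g hg i hit
  by_contra hgi
  obtain ⟨j, hj, hmin⟩ := exists_min_image {k ∈ t | g k ≠ 0} w ⟨i, by simp [hit, hgi]⟩
  rw [mem_filter] at hj
  have hφj : φ j (∑ k ∈ t, g k • v k) = g j * φ j (v j) := by
    rw [map_sum, sum_eq_single_of_mem j hj.1]
    · simp
    intro k hk hkj
    by_cases hgk : g k = 0
    · simp [hgk]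
    · simp [hzero j k hkj (hmin k (by simp [hk, hgk]))]
  rw [hg, map_zero] at hφj
  exact mul_ne_zero hj.2 (hdiag j) hφj.symm

theorem real_inner_lt_norm_sq_of_norm_le {E : Type*} [NormedAddCommGroup E]
    [InnerProductSpace ℝ E] {x y : E} (hxy : x ≠ y) (hnorm : ‖x‖ ≤ ‖y‖) : ⟪x, y⟫_ℝ < ‖y‖ ^ 2 := by
  have hpos : 0 < ‖x - y‖ := norm_pos_iff.2 (sub_ne_zero.2 hxy)
  nlinarith [norm_sub_sq_real x y, norm_nonneg x]

namespace MvPolynomial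

variable {σ : Type*} [Fintype σ]

noncomputable def innerPoly (p : EuclideanSpace ℝ σ) : MvPolynomial σ ℝ := ∑ i, C (p i) * X i

theorem eval_innerPoly (p x : EuclideanSpace ℝ σ) : eval x.ofLp (innerPoly p) = ⟪x, p⟫_ℝ := by
  simp [innerPoly, PiLp.inner_apply, mul_comm]

theorem totalDegree_innerPoly_le (p : EuclideanSpace ℝ σ) : (innerPoly p).totalDegree ≤ 1 := by
  refine (totalDegree_finsetSum _ _).trans (Finset.sup_le fun i _ => ?_)
  refine (totalDegree_mul _ _).trans ?_
  simp [totalDegree_C, totalDegree_X]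

noncomputable def dezaFranklPoly (A : Finset ℝ) (p : EuclideanSpace ℝ σ) : MvPolynomial σ ℝ :=
  ∏ a ∈ A.erase (‖p‖ ^ 2), (innerPoly p - C a)

variable (A : Finset ℝ) (p : EuclideanSpace ℝ σ)

theorem totalDegree_dezaFranklPoly_le : (dezaFranklPoly A p).totalDegree ≤ #A := by
  calc (dezaFranklPoly A p).totalDegree
      ≤ ∑ a ∈ A.erase (‖p‖ ^ 2), (innerPoly p - C a).totalDegree := by
        unfold dezaFranklPoly; exact totalDegree_finsetProd _ _
    _ ≤ ∑ _a ∈ A.erase (‖p‖ ^ 2), 1 := by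
        gcongr with a
        exact (totalDegree_sub_C_le _ a).trans (totalDegree_innerPoly_le p)
    _ = #(A.erase (‖p‖ ^ 2)) := by rw [sum_const, smul_eq_mul, mul_one]
    _ ≤ #A := card_erase_le

theorem eval_dezaFranklPoly (x : EuclideanSpace ℝ σ) :
    eval x.ofLp (dezaFranklPoly A p) = ∏ a ∈ A.erase (‖p‖ ^ 2), (⟪x, p⟫_ℝ - a) := by
  simp [dezaFranklPoly, eval_innerPoly]

theorem eval_self_dezaFranklPoly_ne_zero : eval p.ofLp (dezaFranklPoly A p) ≠ 0 := by
  rw [eval_dezaFranklPoly, real_inner_self_eq_norm_sq]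
  exact prod_ne_zero_iff.2 fun a ha => sub_ne_zero.2 (ne_of_mem_erase ha).symm

theorem eval_dezaFranklPoly_eq_zero {x : EuclideanSpace ℝ σ} (hA : ⟪x, p⟫_ℝ ∈ A)
    (hx : ⟪x, p⟫_ℝ ≠ ‖p‖ ^ 2) : eval x.ofLp (dezaFranklPoly A p) = 0 := by
  rw [eval_dezaFranklPoly]
  exact prod_eq_zero (mem_erase.2 ⟨hx, hA⟩) (sub_self _)

end MvPolynomial

theorem ncard_le_choose_of_inner_mem {n s : ℕ} {F : Set (EuclideanSpace ℝ (Fin n))}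
    (hF : F.Finite) {A : Finset ℝ} (hAs : #A ≤ s)
    (hFA : ∀ p ∈ F, ∀ q ∈ F, p ≠ q → ⟪p, q⟫_ℝ ∈ A) :
    F.ncard ≤ (n + s).choose s := by
  have : Fintype F := hF.fintype
  let v (p : F) : restrictTotalDegree (Fin n) ℝ s :=
    ⟨dezaFranklPoly A p.1, (mem_restrictTotalDegree (Fin n) s _).2
      ((totalDegree_dezaFranklPoly_le A p.1).trans hAs)⟩
  have hv : LinearIndependent ℝ v := by
    refine linearIndependent_of_triangular v
      (fun p => (aeval p.1.ofLp).toLinearMap ∘ₗ Submodule.subtype _) (fun p => ‖p.1‖)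
      (fun p => eval_self_dezaFranklPoly_ne_zero A p.1) fun p q hqp hnorm => ?_
    have hpq : p.1 ≠ q.1 := fun h => hqp (Subtype.ext h).symm
    exact eval_dezaFranklPoly_eq_zero A q.1 (hFA p p.2 q q.2 hpq)
      (real_inner_lt_norm_sq_of_norm_le hpq hnorm).ne
  calc F.ncard = Fintype.card F := by rw [← Nat.card_coe_set_eq, Nat.card_eq_fintype_card]
    _ ≤ finrank ℝ (restrictTotalDegree (Fin n) ℝ s) := hv.fintype_card_le_finrank
    _ = (n + s).choose s := finrank_restrictTotalDegree ℝ n s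

theorem stmt_12 (n s : ℕ) (F : Set (EuclideanSpace ℝ (Fin n))) (hF : F.Finite)
    (hsp : {x : ℝ | ∃ p₁ ∈ F, ∃ p₂ ∈ F, p₁ ≠ p₂ ∧
      x = inner ℝ p₁ p₂}.ncard ≤ s) :
    F.ncard ≤ (n + s).choose s := by
  set A := {x : ℝ | ∃ p₁ ∈ F, ∃ p₂ ∈ F, p₁ ≠ p₂ ∧ x = inner ℝ p₁ p₂}
  have hA : A.Finite := (hF.image2 (inner ℝ) hF).subset <| by
    rintro _ ⟨p, hp, q, hq, -, rfl⟩
    exact ⟨p, hp, q, hq, rfl⟩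
  refine ncard_le_choose_of_inner_mem hF (A := hA.toFinset) ?_ fun p hp q hq hpq => ?_
  · rwa [← Set.ncard_eq_toFinset_card _ hA]
  · exact hA.mem_toFinset.2 ⟨p, hp, q, hq, hpq, rfl⟩
end

section
/- For q = 2: let A_1, ..., A_n ⊆ ℝ each have size 2 and B = A_1 × ... × A_n. If F ⊆ B has |d(F)| ≤ s (at most s distinct distances among distinct points), then |F| ≤ 2 · ∑_{i=0}^{s} C(n, i). -/
/-!
Polynomial method. If every coordinate takes only two values on `F`, then `x_i ^ 2` is an affine
function of `x_i` there, so for each `p ∈ F` the function `y ↦ ∏_{d ∈ D} (d ^ 2 - |p - y| ^ 2)`,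
a polynomial of degree `2|D|`, agrees on `F` with a combination of squarefree monomials of degree
at most `|D|`. It vanishes on `F \ {p}` but not at `p`, so these `|F|` functions are linearly
independent in a space of dimension at most `∑_{i ≤ |D|} (n choose i)`.
-/

open Finset Submodule Module

section Multilinear

variable {K X ι : Type*} [Field K] (x : X → ι → K)

def coordMonomial (S : Finset ι) : X → K := fun y => ∏ i ∈ S, x y i

/-- The functions on `X` given by multilinear polynomials of degree at most `k` in the
coordinates `x`. -/
def multilinearSpan (k : ℕ) : Submodule K (X → K) :=
  span K (coordMonomial x '' {S | #S ≤ k})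

variable {x}

theorem coordMonomial_mem_multilinearSpan {S : Finset ι} {k : ℕ} (hS : #S ≤ k) :
    coordMonomial x S ∈ multilinearSpan x k :=
  subset_span ⟨S, hS, rfl⟩

variable (x) in
theorem multilinearSpan_mono : Monotone (multilinearSpan x) :=
  fun _ _ hkm => span_mono (Set.image_mono fun _ hS => le_trans hS hkm)

@[simp]
theorem coordMonomial_empty : coordMonomial x ∅ = 1 := by
  funext y; simp [coordMonomial]

@[simp]
theorem coordMonomial_singleton (j : ι) : coordMonomial x {j} = fun y => x y j := by
  funext y; simp [coordMonomial]

theorem one_mem_multilinearSpan (k : ℕ) : 1 ∈ multilinearSpan x k := by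
  simpa using coordMonomial_mem_multilinearSpan (x := x) (S := ∅) (Nat.zero_le k)

theorem coord_mem_multilinearSpan_one (j : ι) : (fun y => x y j) ∈ multilinearSpan x 1 := by
  simpa using coordMonomial_mem_multilinearSpan (x := x) (card_singleton j).le

variable (x) in
theorem finrank_multilinearSpan_le [Fintype ι] (k : ℕ) :
    finrank K (multilinearSpan x k) ≤ #{S : Finset ι | #S ≤ k} := by
  classical
  have hgen : coordMonomial x '' {S | #S ≤ k} =
      (({S : Finset ι | #S ≤ k} : Finset (Finset ι)).image (coordMonomial x) : Set (X → K)) := by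
    simp
  rw [multilinearSpan, hgen]
  exact (finrank_span_finset_le_card _).trans card_image_le

section QuadraticCoordinates

variable [DecidableEq ι] {α β : ι → K} (hx : ∀ y i, x y i ^ 2 = α i * x y i + β i)
include hx

theorem coordMonomial_mul_coord_mem {S : Finset ι} {k : ℕ} (hS : #S ≤ k) (j : ι) :
    coordMonomial x S * (fun y => x y j) ∈ multilinearSpan x (k + 1) := by
  by_cases hj : j ∈ S
  · have hreduce : coordMonomial x S * (fun y => x y j)
        = α j • coordMonomial x S + β j • coordMonomial x (S.erase j) := by
      funext y
      have hprod := mul_prod_erase S (x y) hj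
      simp only [coordMonomial, Pi.mul_apply, Pi.add_apply, Pi.smul_apply, smul_eq_mul] at hprod ⊢
      rw [← hprod]
      linear_combination (∏ i ∈ S.erase j, x y i) * hx y j
    rw [hreduce]
    exact add_mem (smul_mem _ _ (coordMonomial_mem_multilinearSpan (by omega)))
      (smul_mem _ _ (coordMonomial_mem_multilinearSpan (card_erase_le.trans (by omega))))
  · have hinsert : coordMonomial x S * (fun y => x y j) = coordMonomial x (insert j S) := by
      funext y
      simp [coordMonomial, prod_insert hj, mul_comm]
    rw [hinsert]
    exact coordMonomial_mem_multilinearSpan (by rw [card_insert_of_notMem hj]; omega)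

theorem mul_mem_multilinearSpan_succ {f g : X → K} {k : ℕ} (hf : f ∈ multilinearSpan x k)
    (hg : g ∈ multilinearSpan x 1) : f * g ∈ multilinearSpan x (k + 1) := by
  suffices multilinearSpan x k * multilinearSpan x 1 ≤ multilinearSpan x (k + 1) from
    this (mul_mem_mul hf hg)
  rw [multilinearSpan, multilinearSpan, span_mul_span, span_le]
  rintro _ ⟨_, ⟨S, hS, rfl⟩, _, ⟨T, hT, rfl⟩, rfl⟩
  rcases Nat.le_one_iff_eq_zero_or_eq_one.1 hT with hT | hT
  · rw [card_eq_zero.1 hT]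
    simpa using multilinearSpan_mono x k.le_succ (coordMonomial_mem_multilinearSpan hS)
  · obtain ⟨j, rfl⟩ := card_eq_one.1 hT
    simpa using coordMonomial_mul_coord_mem hx hS j

omit [DecidableEq ι] in
theorem sq_coord_mem_multilinearSpan_one (j : ι) :
    (fun y => x y j ^ 2) ∈ multilinearSpan x 1 := by
  have hsq : (fun y => x y j ^ 2) = α j • (fun y => x y j) + β j • 1 := by
    funext y; simp [hx, mul_comm]
  rw [hsq]
  exact add_mem (smul_mem _ _ (coord_mem_multilinearSpan_one j))
    (smul_mem _ _ (one_mem_multilinearSpan 1))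

end QuadraticCoordinates

end Multilinear

section Distance

variable {X ι : Type*} [Fintype ι] {x : X → EuclideanSpace ℝ ι} {α β : ι → ℝ}
  (hx : ∀ y i, x y i ^ 2 = α i * x y i + β i)
include hx

theorem sub_dist_sq_mem_multilinearSpan_one (p : EuclideanSpace ℝ ι) (d : ℝ) :
    (fun y => d ^ 2 - dist p (x y) ^ 2) ∈ multilinearSpan (fun y i => x y i) 1 := by
  have hexpand : (fun y => d ^ 2 - dist p (x y) ^ 2) =
      d ^ 2 • 1 - ∑ i, ((p i ^ 2) • 1 - (2 * p i) • (fun y => x y i) + fun y => x y i ^ 2) := by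
    funext y
    simp only [EuclideanSpace.dist_sq_eq, Real.dist_eq, sq_abs, Pi.sub_apply, Pi.add_apply,
      Pi.smul_apply, Finset.sum_apply, Pi.one_apply, smul_eq_mul, mul_one]
    congr 1
    exact sum_congr rfl fun i _ => by ring
  rw [hexpand]
  refine sub_mem (smul_mem _ _ (one_mem_multilinearSpan 1)) (sum_mem fun i _ => ?_)
  exact add_mem (sub_mem (smul_mem _ _ (one_mem_multilinearSpan 1))
    (smul_mem _ _ (coord_mem_multilinearSpan_one i))) (sq_coord_mem_multilinearSpan_one hx i)

theorem prod_sub_dist_sq_mem_multilinearSpan [DecidableEq ι] (p : EuclideanSpace ℝ ι)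
    (D : Finset ℝ) :
    (fun y => ∏ d ∈ D, (d ^ 2 - dist p (x y) ^ 2)) ∈ multilinearSpan (fun y i => x y i) #D := by
  classical
  induction D using Finset.induction_on with
  | empty =>
    simp only [prod_empty, card_empty]
    exact one_mem_multilinearSpan 0
  | insert d D hd ih =>
    rw [card_insert_of_notMem hd]
    have hfactor : (fun y => ∏ e ∈ insert d D, (e ^ 2 - dist p (x y) ^ 2)) =
        (fun y => ∏ e ∈ D, (e ^ 2 - dist p (x y) ^ 2)) * fun y => d ^ 2 - dist p (x y) ^ 2 := by
      funext y
      simp [prod_insert hd, mul_comm]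
    rw [hfactor]
    exact mul_mem_multilinearSpan_succ hx ih (sub_dist_sq_mem_multilinearSpan_one hx p d)

end Distance

theorem card_le_finrank_of_diagonal {K X : Type*} [Field K] [Fintype X] (W : Submodule K (X → K))
    (v : X → X → K) (hvW : ∀ p, v p ∈ W) (hdiag : ∀ p, v p p ≠ 0)
    (hoff : ∀ p q, p ≠ q → v p q = 0) : Fintype.card X ≤ finrank K W := by
  have hli : LinearIndependent K v := by
    rw [Fintype.linearIndependent_iff]
    intro g hg p
    have hp := congrFun hg p
    simp only [Finset.sum_apply, Pi.smul_apply, smul_eq_mul, Pi.zero_apply] at hp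
    rw [sum_eq_single p (fun q _ hq => by rw [hoff q p hq, mul_zero]) (by simp)] at hp
    exact (mul_eq_zero.1 hp).resolve_right (hdiag p)
  have hliW : LinearIndependent K fun p => (⟨v p, hvW p⟩ : W) := hli.of_comp W.subtype
  exact hliW.fintype_card_le_finrank

theorem card_le_of_dist_mem {ι : Type*} [Fintype ι] [DecidableEq ι]
    (F : Finset (EuclideanSpace ℝ ι)) {α β : ι → ℝ} (hF : ∀ p ∈ F, ∀ i, p i ^ 2 = α i * p i + β i)
    (D : Finset ℝ) (hD0 : 0 ∉ D) (hD : ∀ p ∈ F, ∀ q ∈ F, p ≠ q → dist p q ∈ D) :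
    #F ≤ #{S : Finset ι | #S ≤ #D} := by
  let v : F → F → ℝ := fun p y => ∏ d ∈ D, (d ^ 2 - dist (p : EuclideanSpace ℝ ι) y ^ 2)
  have hdiag : ∀ p, v p p ≠ 0 := fun p => by
    simpa [v, prod_ne_zero_iff] using hD0
  have hoff : ∀ p q, p ≠ q → v p q = 0 := fun p q hpq =>
    prod_eq_zero (hD p p.2 q q.2 (Subtype.coe_injective.ne hpq)) (sub_self _)
  calc #F = Fintype.card F := (Fintype.card_coe F).symm
    _ ≤ finrank ℝ (multilinearSpan (fun (y : F) i => (y : EuclideanSpace ℝ ι) i) #D) :=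
      card_le_finrank_of_diagonal _ v
        (fun p => prod_sub_dist_sq_mem_multilinearSpan (fun (y : F) i => hF y y.2 i) p D) hdiag hoff
    _ ≤ #{S : Finset ι | #S ≤ #D} := finrank_multilinearSpan_le _ _

theorem card_filter_card_le_eq_sum_choose {ι : Type*} [Fintype ι] (k : ℕ) :
    #{S : Finset ι | #S ≤ k} = ∑ i ∈ range (k + 1), (Fintype.card ι).choose i := by
  classical
  rw [card_eq_sum_card_fiberwise (f := card) (t := range (k + 1))
    (fun S hS => by simpa [Nat.lt_succ_iff] using hS)]
  refine sum_congr rfl fun i hi => ?_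
  rw [← card_univ, ← card_powersetCard]
  congr 1
  ext S
  simp only [mem_filter, mem_univ, true_and, mem_powersetCard_univ, mem_range] at hi ⊢
  omega

theorem stmt_14_general (n s : ℕ) (A : Fin n → Set ℝ) (hA : ∀ i, (A i).ncard = 2)
    (F : Set (EuclideanSpace ℝ (Fin n)))
    (hFB : ∀ p ∈ F, ∀ i, p i ∈ A i)
    (hdist : {d : ℝ | ∃ p₁ ∈ F, ∃ p₂ ∈ F, p₁ ≠ p₂ ∧ d = dist p₁ p₂}.ncard ≤ s) :
    F.ncard ≤ 2 * ∑ i ∈ Finset.range (s + 1), n.choose i := by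
  obtain hF | hF := F.finite_or_infinite
  swap
  · simp [hF.ncard]
  choose a b _ hAab using fun i => Set.ncard_eq_two.1 (hA i)
  have hquad : ∀ p ∈ hF.toFinset, ∀ i, p i ^ 2 = (a i + b i) * p i + -(a i * b i) := by
    intro p hp i
    rcases hAab i ▸ hFB p (hF.mem_toFinset.1 hp) i with h | h <;> rw [h] <;> ring
  set D := {d : ℝ | ∃ p₁ ∈ F, ∃ p₂ ∈ F, p₁ ≠ p₂ ∧ d = dist p₁ p₂}
  have hDfin : D.Finite := ((hF.prod hF).image fun q => dist q.1 q.2).subset <| by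
    rintro _ ⟨p, hp, q, hq, -, rfl⟩
    exact ⟨(p, q), ⟨hp, hq⟩, rfl⟩
  have hD0 : 0 ∉ hDfin.toFinset := by
    rw [hDfin.mem_toFinset]
    rintro ⟨p, -, q, -, hpq, h⟩
    exact hpq (dist_eq_zero.1 h.symm)
  have hbound := card_le_of_dist_mem hF.toFinset hquad hDfin.toFinset hD0 fun p hp q hq hpq =>
    hDfin.mem_toFinset.2 ⟨p, hF.mem_toFinset.1 hp, q, hF.mem_toFinset.1 hq, hpq, rfl⟩
  rw [card_filter_card_le_eq_sum_choose, Fintype.card_fin,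
    ← Set.ncard_eq_toFinset_card D hDfin] at hbound
  calc F.ncard = #hF.toFinset := Set.ncard_eq_toFinset_card F hF
    _ ≤ ∑ i ∈ range (D.ncard + 1), n.choose i := hbound
    _ ≤ ∑ i ∈ range (s + 1), n.choose i := sum_le_sum_of_subset (range_subset_range.2 (by omega))
    _ ≤ 2 * ∑ i ∈ range (s + 1), n.choose i := Nat.le_mul_of_pos_left _ two_pos

theorem stmt_14 (n s : ℕ) (A : Fin n → Set ℝ) (hA : ∀ i, (A i).ncard = 2)
    (F : Set (EuclideanSpace ℝ (Fin n))) (hF : F.Finite)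
    (hFB : ∀ p ∈ F, ∀ i, p i ∈ A i)
    (hdist : {d : ℝ | ∃ p₁ ∈ F, ∃ p₂ ∈ F, p₁ ≠ p₂ ∧ d = dist p₁ p₂}.ncard ≤ s) :
    F.ncard ≤ 2 * ∑ i ∈ Finset.range (s + 1), n.choose i :=
  stmt_14_general n s A hA F hFB hdist
end

section
/- Let F ⊆ {0,1}^n ⊆ ℝ^n. If the set of Hamming weights of symmetric differences {|A Δ B| : A ≠ B, with characteristic vectors in F} has at most s elements, then |F| ≤ 2 · ∑_{i=0}^{s} C(n, i). -/
/-! Delsarte's polynomial method. If all distances between distinct members of `F` lie in a set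
`D` of positive integers, then the functions `x ↦ ∏_{d ∈ D} (d - |A Δ x|)`, `A ∈ F`, vanish at every
member of `F` other than `A` and not at `A`, so they are linearly independent. Each is a polynomial
of degree `|D|` in the coordinates of `x`, and on `{0,1}^n` every such polynomial is a combination
of the multilinear monomials of degree at most `|D|`, of which there are `∑_{i ≤ |D|} C(n, i)`. -/

open Finset Module Submodule
open scoped symmDiff

section LinearIndependent

variable {ι X K : Type*} [Field K]

theorem linearIndependent_of_eval_diagonal (f : ι → X → K) (a : ι → X)
    (hdiag : ∀ i, f i (a i) ≠ 0) (hoff : ∀ i j, i ≠ j → f i (a j) = 0) :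
    LinearIndependent K f := by
  rw [linearIndependent_iff']
  intro t c hsum i hi
  have hi_eval : ∑ j ∈ t, c j * f j (a i) = c i * f i (a i) :=
    sum_eq_single i (fun j _ hji => by rw [hoff j i hji, mul_zero]) (absurd hi)
  have hzero := congrFun hsum (a i)
  simp only [Finset.sum_apply, Pi.smul_apply, smul_eq_mul, Pi.zero_apply, hi_eval] at hzero
  exact (mul_eq_zero.1 hzero).resolve_right (hdiag i)

end LinearIndependent

namespace Cube

variable {α : Type*} [DecidableEq α]

/-- The multilinear monomial `∏_{i ∈ T} xᵢ` on `{0,1}^α`, a point being given by its support. -/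
def monomial (T : Finset α) : Finset α → ℝ :=
  fun x => if T ⊆ x then 1 else 0

theorem monomial_empty : monomial (∅ : Finset α) = 1 := by
  funext x
  simp [monomial]

theorem monomial_mul (S T : Finset α) : monomial S * monomial T = monomial (S ∪ T) := by
  funext x
  by_cases hS : S ⊆ x <;> by_cases hT : T ⊆ x <;> simp [monomial, union_subset_iff, hS, hT]

variable (α) in
def degreeLE (k : ℕ) : Submodule ℝ (Finset α → ℝ) :=
  span ℝ (Set.range fun T : {T : Finset α // #T ≤ k} => monomial T.1)

theorem monomial_mem_degreeLE {k : ℕ} {T : Finset α} (hT : #T ≤ k) :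
    monomial T ∈ degreeLE α k :=
  subset_span ⟨⟨T, hT⟩, rfl⟩

theorem one_mem_degreeLE (k : ℕ) : (1 : Finset α → ℝ) ∈ degreeLE α k :=
  monomial_empty (α := α) ▸ monomial_mem_degreeLE (Nat.zero_le k)

theorem mul_mem_degreeLE {k l : ℕ} {f g : Finset α → ℝ} (hf : f ∈ degreeLE α k)
    (hg : g ∈ degreeLE α l) : f * g ∈ degreeLE α (k + l) := by
  have hfg := mul_mem_mul hf hg
  rw [degreeLE, degreeLE, span_mul_span] at hfg
  refine span_le.2 ?_ hfg
  rintro _ ⟨_, ⟨⟨S, hS⟩, rfl⟩, _, ⟨⟨T, hT⟩, rfl⟩, rfl⟩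
  show monomial S * monomial T ∈ _
  rw [monomial_mul]
  exact monomial_mem_degreeLE ((card_union_le S T).trans (add_le_add hS hT))

theorem prod_mem_degreeLE {ι : Type*} {k : ℕ} (s : Finset ι) {f : ι → Finset α → ℝ}
    (hf : ∀ i ∈ s, f i ∈ degreeLE α k) : ∏ i ∈ s, f i ∈ degreeLE α (#s * k) := by
  induction s using Finset.cons_induction with
  | empty => simpa using one_mem_degreeLE 0
  | cons a s ha ih =>
    rw [prod_cons, card_cons, add_mul, one_mul, add_comm]
    exact mul_mem_degreeLE (hf a (mem_cons_self a s)) (ih fun i hi => hf i (mem_cons_of_mem hi))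

variable [Fintype α]

theorem card_symmDiff_mem_degreeLE_one (A : Finset α) :
    (fun x => (#(A ∆ x) : ℝ)) ∈ degreeLE α 1 := by
  have hsplit : (fun x => (#(A ∆ x) : ℝ)) =
      ∑ i, if i ∈ A then 1 - monomial {i} else monomial {i} := by
    funext x
    have hcount : (#(A ∆ x) : ℝ) = ∑ i, if i ∈ A ∆ x then 1 else 0 := by simp
    rw [hcount, Finset.sum_apply]
    refine sum_congr rfl fun i _ => ?_
    by_cases hA : i ∈ A <;> by_cases hx : i ∈ x <;> simp [monomial, mem_symmDiff, hA, hx]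
  rw [hsplit]
  refine sum_mem fun i _ => ?_
  have hi : monomial {i} ∈ degreeLE α 1 := monomial_mem_degreeLE (card_singleton i).le
  split_ifs
  · exact sub_mem (one_mem_degreeLE 1) hi
  · exact hi

theorem const_sub_card_symmDiff_mem_degreeLE_one (c : ℝ) (A : Finset α) :
    (fun x => c - #(A ∆ x)) ∈ degreeLE α 1 := by
  have hconst : (fun x => c - #(A ∆ x)) = c • 1 - fun x => (#(A ∆ x) : ℝ) := by
    funext x
    simp
  rw [hconst]
  exact sub_mem (smul_mem _ c (one_mem_degreeLE 1)) (card_symmDiff_mem_degreeLE_one A)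

theorem card_filter_card_le_eq_sum_choose (k : ℕ) :
    #{T : Finset α | #T ≤ k} = ∑ i ∈ range (k + 1), (Fintype.card α).choose i := by
  have hsplit : ({T : Finset α | #T ≤ k} : Finset _) =
      (range (k + 1)).biUnion fun i => powersetCard i univ := by
    ext T
    simp
  rw [hsplit, card_biUnion fun i _ j _ hij => univ.pairwise_disjoint_powersetCard hij]
  simp

theorem finrank_degreeLE_le (k : ℕ) :
    finrank ℝ (degreeLE α k) ≤ ∑ i ∈ range (k + 1), (Fintype.card α).choose i := by
  rw [← card_filter_card_le_eq_sum_choose, ← Fintype.card_subtype]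
  exact finrank_range_le_card _

theorem card_le_sum_choose_of_card_symmDiff_mem (F : Finset (Finset α)) (D : Finset ℕ)
    (hD0 : 0 ∉ D) (hD : ∀ A ∈ F, ∀ B ∈ F, A ≠ B → #(A ∆ B) ∈ D) :
    #F ≤ ∑ i ∈ range (#D + 1), (Fintype.card α).choose i := by
  let f : F → Finset α → ℝ := fun A x => ∏ d ∈ D, ((d : ℝ) - #(A.1 ∆ x))
  have hf_mem (A : F) : f A ∈ degreeLE α #D := by
    have := prod_mem_degreeLE D fun d _ => const_sub_card_symmDiff_mem_degreeLE_one (d : ℝ) A.1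
    rwa [mul_one, prod_fn] at this
  have hf_indep : LinearIndependent ℝ f := by
    refine linearIndependent_of_eval_diagonal f Subtype.val (fun A => ?_) fun A B hAB => ?_
    · simp only [f, symmDiff_self, bot_eq_empty, card_empty, Nat.cast_zero, sub_zero]
      exact prod_ne_zero_iff.2 fun d hd => Nat.cast_ne_zero.2 (ne_of_mem_of_not_mem hd hD0)
    · exact prod_eq_zero (hD A A.2 B B.2 (Subtype.coe_ne_coe.2 hAB)) (sub_self _)
  calc #F = finrank ℝ (span ℝ (Set.range f)) := by
        rw [finrank_span_eq_card hf_indep, Fintype.card_coe]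
    _ ≤ finrank ℝ (degreeLE α #D) := finrank_mono (span_le.2 (Set.range_subset_iff.2 hf_mem))
    _ ≤ _ := finrank_degreeLE_le #D

end Cube

theorem stmt_15 (n s : ℕ) (F : Finset (Finset (Fin n)))
    (hsd : {k : ℕ | ∃ A ∈ F, ∃ B ∈ F, A ≠ B ∧ k = (symmDiff A B).card}.ncard ≤ s) :
    F.card ≤ 2 * ∑ i ∈ Finset.range (s + 1), n.choose i := by
  set D := F.offDiag.image fun p => #(p.1 ∆ p.2)
  have hD_eq : {k : ℕ | ∃ A ∈ F, ∃ B ∈ F, A ≠ B ∧ k = (symmDiff A B).card} = D := by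
    ext k
    simp [D, eq_comm, and_assoc]
  have hDs : #D ≤ s := by rwa [hD_eq, Set.ncard_coe_finset] at hsd
  have hD0 : 0 ∉ D := by simp [D]
  calc #F ≤ ∑ i ∈ range (#D + 1), n.choose i := by
        simpa using Cube.card_le_sum_choose_of_card_symmDiff_mem F D hD0
          fun A hA B hB hAB => mem_image.2 ⟨(A, B), mem_offDiag.2 ⟨hA, hB, hAB⟩, rfl⟩
    _ ≤ ∑ i ∈ range (s + 1), n.choose i := sum_le_sum_of_subset (range_mono (by omega))
    _ ≤ 2 * ∑ i ∈ range (s + 1), n.choose i := Nat.le_mul_of_pos_left _ two_pos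
end
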